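/- arXiv:2508.11580 — 10 statements merged into one kernel-verified Lean document; each statement's English description precedes it below -/
import Mathlib

section
/- Let w, x, y, z, a, b ∈ ℂ with x ≠ 0, wz ≠ xy, and a²x − abw + abz ≠ b²y. Set A = [[w, x],[y, z]] and B = [[a, b],[by/x, (ax − bw + bz)/x]]. Then A and B have a common eigenvector; consequently the pair (A, B) is reducible, i.e., there is a subspace V of ℂ² with 0 ≠ V ≠ ℂ² invariant under both A and B. -/
open Matrix

/-- Theorem 3.3(1): every representation `ρ₁ : SB₂ → GL₂(ℂ)` of the first form is reducible:
the matrices `A = ρ₁(σ₁)` and `B = ρ₁(τ₁)` have a common eigenvector. -/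
theorem rho1_reducible (w x y z a b : ℂ)
    (hx : x ≠ 0) (hA : w * z ≠ x * y)
    (hB : a ^ 2 * x - a * b * w + a * b * z ≠ b ^ 2 * y) :
    (∃ v : Fin 2 → ℂ, v ≠ 0 ∧ ∃ α β : ℂ,
        (!![w, x; y, z]).mulVec v = α • v ∧
        (!![a, b; b * y / x, (a * x - b * w + b * z) / x]).mulVec v = β • v) ∧
    (∃ V : Submodule ℂ (Fin 2 → ℂ), V ≠ ⊥ ∧ V ≠ ⊤ ∧
        (∀ v ∈ V, (!![w, x; y, z]).mulVec v ∈ V) ∧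
        (∀ v ∈ V, (!![a, b; b * y / x, (a * x - b * w + b * z) / x]).mulVec v ∈ V)) := by
  obtain ⟨s, hs⟩ : ∃ s : ℂ, s ^ 2 = (w + z) ^ 2 - 4 * (w * z - x * y) :=
    IsAlgClosed.exists_pow_nat_eq _ (n := 2) (by norm_num)
  set l : ℂ := ((w + z) + s) / 2 with hl
  clear_value l
  have hlam : l ^ 2 - (w + z) * l + (w * z - x * y) = 0 := by
    rw [hl]; linear_combination hs / 4
  set v : Fin 2 → ℂ := ![x, l - w] with hv
  have hv0 : v ≠ 0 := by
    intro h
    have := congrFun h 0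
    simp [hv] at this
    exact hx this
  have hAv : (!![w, x; y, z]).mulVec v = l • v := by
    funext i
    fin_cases i
    · simp [hv, Matrix.mulVec, dotProduct, Fin.sum_univ_two]
      ring
    · simp [hv, Matrix.mulVec, dotProduct, Fin.sum_univ_two]
      linear_combination -hlam
  have hBv : (!![a, b; b * y / x, (a * x - b * w + b * z) / x]).mulVec v
      = ((a * x - b * w + b * l) / x) • v := by
    funext i
    fin_cases i
    · simp [hv, Matrix.mulVec, dotProduct, Fin.sum_univ_two]
      field_simp
      ring
    · simp [hv, Matrix.mulVec, dotProduct, Fin.sum_univ_two]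
      field_simp
      linear_combination -b * hlam
  refine ⟨⟨v, hv0, l, (a * x - b * w + b * l) / x, hAv, hBv⟩, ?_⟩
  refine ⟨Submodule.span ℂ {v}, ?_, ?_, ?_, ?_⟩
  · simpa [Submodule.span_singleton_eq_bot] using hv0
  · intro h
    have h1 : (![0, 1] : Fin 2 → ℂ) ∈ Submodule.span ℂ {v} := h ▸ Submodule.mem_top
    rw [Submodule.mem_span_singleton] at h1
    obtain ⟨c, hc⟩ := h1
    have h0 := congrFun hc 0
    have h2 := congrFun hc 1
    simp [hv] at h0 h2
    rcases h0 with h0 | h0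
    · rw [h0] at h2; simp at h2
    · exact hx h0
  · intro u hu
    rw [Submodule.mem_span_singleton] at hu ⊢
    obtain ⟨c, rfl⟩ := hu
    exact ⟨c * l, by rw [Matrix.mulVec_smul, hAv, smul_smul]⟩
  · intro u hu
    rw [Submodule.mem_span_singleton] at hu ⊢
    obtain ⟨c, rfl⟩ := hu
    exact ⟨c * ((a * x - b * w + b * l) / x), by rw [Matrix.mulVec_smul, hBv, smul_smul]⟩
end

section
/- Let λ₁, λ₂ ∈ ℂ be nonzero with λ₁² + λ₂² − λ₁λ₂ ≠ 0, and set S₁ = [[λ₁, λ₁],[0, λ₂]] and S₂ = [[λ₂, 0],[−λ₂, λ₁]]. Suppose T₁ and T₂ are invertible 2×2 complex matrices satisfying T₁S₁ = S₁T₁, T₂S₂ = S₂T₂, S₁S₂T₁ = T₂S₁S₂, and S₂S₁T₂ = T₁S₂S₁. Then there exist a₁, b₁ ∈ ℂ with a₁ ≠ 0 and a₁ − b₁(λ₁ − λ₂)/λ₁ ≠ 0 such that T₁ = [[a₁, b₁],[0, a₁ − b₁(λ₁ − λ₂)/λ₁]] and T₂ = [[a₁ − b₁(λ₁ − λ₂)/λ₁,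 0],[−b₁λ₂/λ₁, a₁]]. -/
open Matrix

/-- Theorem 4.3: classification of the extensions to `SB₃` of the Tuba–Wenzl irreducible
representations `μ : B₃ → GL₂(ℂ)`. -/
theorem SB3_dim2_extension_classification (l1 l2 : ℂ)
    (h1 : l1 ≠ 0) (h2 : l2 ≠ 0) (h3 : l1 ^ 2 + l2 ^ 2 - l1 * l2 ≠ 0)
    (T1 T2 : Matrix (Fin 2) (Fin 2) ℂ) (hT1 : IsUnit T1) (hT2 : IsUnit T2)
    (r1 : T1 * !![l1, l1; 0, l2] = !![l1, l1; 0, l2] * T1)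
    (r2 : T2 * !![l2, 0; -l2, l1] = !![l2, 0; -l2, l1] * T2)
    (r3 : !![l1, l1; 0, l2] * !![l2, 0; -l2, l1] * T1
        = T2 * (!![l1, l1; 0, l2] * !![l2, 0; -l2, l1]))
    (r4 : !![l2, 0; -l2, l1] * !![l1, l1; 0, l2] * T2
        = T1 * (!![l2, 0; -l2, l1] * !![l1, l1; 0, l2])) :
    ∃ a1 b1 : ℂ, a1 ≠ 0 ∧ a1 - b1 * (l1 - l2) / l1 ≠ 0 ∧
      T1 = !![a1, b1; 0, a1 - b1 * (l1 - l2) / l1] ∧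
      T2 = !![a1 - b1 * (l1 - l2) / l1, 0; -(b1 * l2 / l1), a1] := by
  rw [Matrix.eta_fin_two T1] at r1 r3 hT1 ⊢
  rw [Matrix.eta_fin_two T2] at r2 r3 hT2 ⊢
  set a := T1 0 0; set b := T1 0 1; set c := T1 1 0; set d := T1 1 1
  set p := T2 0 0; set q := T2 0 1; set r := T2 1 0; set s := T2 1 1
  rw [Matrix.isUnit_iff_isUnit_det, isUnit_iff_ne_zero] at hT1 hT2
  simp only [Matrix.det_fin_two_of] at hT1 hT2
  simp only [← Matrix.ext_iff, Fin.forall_fin_two, Matrix.mul_apply, Fin.sum_univ_two,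
    Matrix.cons_val', Matrix.cons_val_zero, Matrix.cons_val_one, Matrix.head_cons,
    Matrix.head_fin_const, Matrix.empty_val', Matrix.cons_val_fin_one, Matrix.of_apply] at r1 r2 r3
  obtain ⟨⟨e1, e2⟩, e3, e4⟩ := r1
  obtain ⟨⟨f1, f2⟩, f3, f4⟩ := r2
  obtain ⟨⟨g1, g2⟩, g3, g4⟩ := r3
  have hc : c = 0 := by
    have h' : l1 * c = 0 := by linear_combination -e1
    exact (mul_eq_zero.mp h').resolve_left h1
  have hq : q = 0 := by
    have h' : q * (l2 * l2) = 0 := by linear_combination g1 - l1 * l1 * hc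
    exact (mul_eq_zero.mp h').resolve_right (mul_ne_zero h2 h2)
  have hs : s = a := by
    have h' : (s - a) * (l2 * l2) = 0 := by linear_combination g3 - l2 * l1 * hc
    exact sub_eq_zero.mp ((mul_eq_zero.mp h').resolve_right (mul_ne_zero h2 h2))
  have hd' : l1 * d = l1 * a - b * (l1 - l2) := by linear_combination -e2
  have hd : d = a - b * (l1 - l2) / l1 := by
    field_simp
    linear_combination hd'
  have hp : p = a - b * (l1 - l2) / l1 := by
    have h' : (p - d) * (l1 * l1) = 0 := by linear_combination -g2 - l2 * l1 * hq
    have := sub_eq_zero.mp ((mul_eq_zero.mp h').resolve_right (mul_ne_zero h1 h1))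
    rw [this]; exact hd
  have hr : r = -(b * l2 / l1) := by
    have h' : (r * l1 + b * l2) * l1 = 0 := by linear_combination -g4 - l2 * l1 * hs + l2 * hd'
    have h'' := (mul_eq_zero.mp h').resolve_right h1
    field_simp
    linear_combination h''
  have had : a * d ≠ 0 := by simpa [hc] using hT1
  have ha : a ≠ 0 := fun h => had (by simp [h])
  have hdd : d ≠ 0 := fun h => had (by simp [h])
  exact ⟨a, b, ha, hd ▸ hdd, by rw [hc, hd], by rw [hq, hp, hr, hs]⟩
end

section
/- Let λ₁, λ₂, a₁, b₁ ∈ ℂ with λ₁ ≠ 0, λ₂ ≠ 0, λ₁² + λ₂² − λ₁λ₂ ≠ 0, a₁ ≠ 0, and a₁ − b₁(λ₁ − λ₂)/λ₁ ≠ 0. Set S₁ = [[λ₁, λ₁],[0, λ₂]], S₂ = [[λ₂, 0],[−λ₂, λ₁]], T₁ = [[a₁, b₁],[0, a₁ − b₁(λ₁ − λ₂)/λ₁]], and T₂ = [[a₁ − b₁(λ₁ − λ₂)/λ₁, 0],[−b₁λ₂/λ₁, a₁]]. Then the only subspaces V of ℂ² with S₁V ⊆ V, S₂V ⊆ V, T₁V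 ⊆ V, and T₂V ⊆ V are V = 0 and V = ℂ²; i.e., the family {S₁, S₂, T₁, T₂} is irreducible. -/
/-!
A nonzero proper invariant subspace of `ℂ²` would be a line spanned by a common eigenvector
of `S₁` and `S₂`. A nonzero `v` is an eigenvector of `S` iff `det [v, S v] = 0`, and these two
determinants are quadratic forms in `v` that vanish simultaneously only at `v = 0`, because
`λ₁ λ₂ ≠ 0` and `λ₁² + λ₂² - λ₁λ₂` is, up to sign, the determinant of the linear system
left after dividing out the factors `v₀` and `v₁`.
-/

open Matrix

theorem Submodule.eq_top_of_rows_mem_of_det_ne_zero {K : Type*} [Field K] {n : ℕ}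
    {V : Submodule K (Fin n → K)} {A : Matrix (Fin n) (Fin n) K} (hA : ∀ i, A i ∈ V)
    (hdet : A.det ≠ 0) : V = ⊤ := by
  have hspan := (linearIndependent_rows_of_det_ne_zero hdet).span_eq_top_of_card_eq_finrank'
    (by simp)
  exact eq_top_iff.2 (hspan ▸ Submodule.span_le.2 (Set.range_subset_iff.2 hA))

theorem Matrix.det_of_vec_mulVec_fin_two {K : Type*} [CommRing K] (A : Matrix (Fin 2) (Fin 2) K)
    (v : Fin 2 → K) :
    (of ![v, A *ᵥ v]).det = A 1 0 * v 0 ^ 2 + (A 1 1 - A 0 0) * v 0 * v 1 - A 0 1 * v 1 ^ 2 := by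
  simp only [det_fin_two, of_apply, cons_val_zero, cons_val_one, mulVec, dotProduct,
    Fin.sum_univ_two]
  ring

theorem det_of_vec_mulVec_S₁_ne_zero_or_S₂ {K : Type*} [Field K] {l1 l2 : K} (h1 : l1 ≠ 0)
    (h2 : l2 ≠ 0) (h3 : l1 ^ 2 + l2 ^ 2 - l1 * l2 ≠ 0) {v : Fin 2 → K} (hv : v ≠ 0) :
    (of ![v, !![l1, l1; 0, l2] *ᵥ v]).det ≠ 0 ∨ (of ![v, !![l2, 0; -l2, l1] *ᵥ v]).det ≠ 0 := by
  by_contra! ⟨hS1, hS2⟩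
  simp only [det_of_vec_mulVec_fin_two, of_apply, cons_val', cons_val_zero, cons_val_one,
    empty_val', cons_val_fin_one] at hS1 hS2
  replace hS1 : v 1 * ((l2 - l1) * v 0 - l1 * v 1) = 0 := by linear_combination hS1
  replace hS2 : v 0 * ((l1 - l2) * v 1 - l2 * v 0) = 0 := by linear_combination hS2
  have hv0 : v 0 ≠ 0 := by
    intro h0
    have h1' : v 1 = 0 := by simpa [h0, h1] using hS1
    exact hv (by ext i; fin_cases i <;> simp [h0, h1'])
  have hv1 : v 1 ≠ 0 := fun h1' ↦ hv0 (by simpa [h1', h2] using hS2)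
  have he1 := (mul_eq_zero.1 hS1).resolve_left hv1
  have he2 := (mul_eq_zero.1 hS2).resolve_left hv0
  -- the coefficients form the first row of the adjugate of the system `he1`, `he2`
  have hdet : (l1 ^ 2 + l2 ^ 2 - l1 * l2) * v 0 = 0 := by
    linear_combination (-(l1 - l2)) * he1 - l1 * he2
  exact mul_ne_zero h3 hv0 hdet

theorem SB3_dim2_extension_irreducible_general (l1 l2 a1 b1 : ℂ)
    (h1 : l1 ≠ 0) (h2 : l2 ≠ 0) (h3 : l1 ^ 2 + l2 ^ 2 - l1 * l2 ≠ 0) :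
    ∀ V : Submodule ℂ (Fin 2 → ℂ),
      ((∀ v ∈ V, (!![l1, l1; 0, l2]).mulVec v ∈ V) ∧
       (∀ v ∈ V, (!![l2, 0; -l2, l1]).mulVec v ∈ V) ∧
       (∀ v ∈ V, (!![a1, b1; 0, a1 - b1 * (l1 - l2) / l1]).mulVec v ∈ V) ∧
       (∀ v ∈ V, (!![a1 - b1 * (l1 - l2) / l1, 0; -(b1 * l2 / l1), a1]).mulVec v ∈ V)) →
      V = ⊥ ∨ V = ⊤ := by
  rintro V ⟨hS1, hS2, -, -⟩
  refine or_iff_not_imp_left.2 fun hV ↦ ?_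
  obtain ⟨v, hv, hv0⟩ := V.ne_bot_iff.1 hV
  have rows_mem {S : Matrix (Fin 2) (Fin 2) ℂ} (hS : S *ᵥ v ∈ V) : ∀ i, of ![v, S *ᵥ v] i ∈ V :=
    Fin.forall_fin_two.2 ⟨hv, hS⟩
  rcases det_of_vec_mulVec_S₁_ne_zero_or_S₂ h1 h2 h3 hv0 with hdet | hdet
  · exact Submodule.eq_top_of_rows_mem_of_det_ne_zero (rows_mem (hS1 v hv)) hdet
  · exact Submodule.eq_top_of_rows_mem_of_det_ne_zero (rows_mem (hS2 v hv)) hdet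

/-- Corollary 4.4: the representations `ρ : SB₃ → GL₂(ℂ)` determined in Theorem 4.3
are irreducible. -/
theorem SB3_dim2_extension_irreducible (l1 l2 a1 b1 : ℂ)
    (h1 : l1 ≠ 0) (h2 : l2 ≠ 0) (h3 : l1 ^ 2 + l2 ^ 2 - l1 * l2 ≠ 0)
    (ha1 : a1 ≠ 0) (hd1 : a1 - b1 * (l1 - l2) / l1 ≠ 0) :
    ∀ V : Submodule ℂ (Fin 2 → ℂ),
      ((∀ v ∈ V, (!![l1, l1; 0, l2]).mulVec v ∈ V) ∧
       (∀ v ∈ V, (!![l2, 0; -l2, l1]).mulVec v ∈ V) ∧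
       (∀ v ∈ V, (!![a1, b1; 0, a1 - b1 * (l1 - l2) / l1]).mulVec v ∈ V) ∧
       (∀ v ∈ V, (!![a1 - b1 * (l1 - l2) / l1, 0; -(b1 * l2 / l1), a1]).mulVec v ∈ V)) →
      V = ⊥ ∨ V = ⊤ :=
  SB3_dim2_extension_irreducible_general l1 l2 a1 b1 h1 h2 h3
end

section
/- Let A₁, A₂, T₁, T₂ be invertible 2×2 complex matrices satisfying A₁A₂A₁ = A₂A₁A₂, A₁T₁ = T₁A₁, A₂T₂ = T₂A₂, A₁A₂T₁ = T₂A₁A₂, and A₂A₁T₂ = T₁A₂A₁, and suppose the only subspaces of ℂ² invariant under all four matrices are 0 and ℂ². Then there exist an invertible 2×2 complex matrix P and scalars λ₁, λ₂, a₁, b₁ ∈ ℂ with λ₁ ≠ 0, λ₂ ≠ 0, λ₁² + λ₂² − λ₁λ₂ ≠ 0, a₁ ≠ 0, a₁ − b₁(λ₁ − λ₂)/λ₁ ≠ 0, such that P⁻¹A₁P = [[λ₁, λ₁],[0, λ₂]], P⁻¹A₂P = [[λ₂, 0],[−λ₂, λ₁]], P⁻¹T₁P = [[a₁, b₁],[0,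 a₁ − b₁(λ₁ − λ₂)/λ₁]], and P⁻¹T₂P = [[a₁ − b₁(λ₁ − λ₂)/λ₁, 0],[−b₁λ₂/λ₁, a₁]]. -/
/-!
Irreducibility first makes `A1` and `A2` non-scalar: by the braid relation, if one of them is a
scalar then so is the other, then `T1 = T2` by `A1 A2 T1 = T2 A1 A2`, and an eigenvector of `T1`
spans an invariant line. Hence the eigenspaces of `A1` and `A2` are lines, preserved by the commuting `T1`
and `T2`, so `A1` and `A2` have no common eigenvector. If `A1 e = l1 e`, then `f = A1 A2 A1 e`
satisfies `A2 f = l1 f`, since `A1 A2 A1` intertwines `A1` and `A2`; after rescaling `e`, the basis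
`e, f` puts `A1` and `A2` in the stated shapes, the braid relation fixing the entries of `A2`.
In this basis `T1` commutes with the triangular `A1`, which determines its shape, and `T2` is the
conjugate of `T1` by `A1 A2`. Finally `l1² + l2² - l1 l2 = 0` would make `(l1, l2 - l1)` a common
eigenvector of all four matrices.
-/

open Matrix

section CommRing

variable {R : Type*} [CommRing R]

theorem conj_mul_of_isUnit {n : Type*} [Fintype n] [DecidableEq n] {P : Matrix n n R}
    (hP : IsUnit P) (X Y : Matrix n n R) : P⁻¹ * (X * Y) * P = P⁻¹ * X * P * (P⁻¹ * Y * P) := by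
  simp only [mul_assoc, mul_nonsing_inv_cancel_left P _ ((isUnit_iff_isUnit_det P).1 hP)]

theorem mulVec_eq_col_add_col (P : Matrix (Fin 2) (Fin 2) R) (v : Fin 2 → R) :
    P *ᵥ v = v 0 • P.col 0 + v 1 • P.col 1 := by
  ext i
  simp [mulVec, dotProduct, Fin.sum_univ_two, mul_comm]

theorem exists_eq_smul_col_add_smul_col {P : Matrix (Fin 2) (Fin 2) R} (hP : IsUnit P)
    (w : Fin 2 → R) : ∃ a b : R, w = a • P.col 0 + b • P.col 1 :=
  ⟨_, _, by rw [← mulVec_eq_col_add_col P (P⁻¹ *ᵥ w), mulVec_mulVec,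
    mul_nonsing_inv P ((isUnit_iff_isUnit_det P).1 hP), one_mulVec]⟩

theorem inv_mul_mul_eq_of_mulVec_col {P M : Matrix (Fin 2) (Fin 2) R} (hP : IsUnit P)
    {p q r s : R} (h0 : M *ᵥ P.col 0 = p • P.col 0 + r • P.col 1)
    (h1 : M *ᵥ P.col 1 = q • P.col 0 + s • P.col 1) :
    P⁻¹ * M * P = !![p, q; r, s] := by
  suffices M * P = P * !![p, q; r, s] by
    rw [mul_assoc, this, ← mul_assoc, nonsing_inv_mul P ((isUnit_iff_isUnit_det P).1 hP), one_mul]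
  refine ext_of_mulVec_single (Fin.forall_fin_two.2 ⟨?_, ?_⟩) <;>
    rw [← mulVec_mulVec, ← mulVec_mulVec, mulVec_single_one, mulVec_single_one,
      mulVec_eq_col_add_col P]
  · simpa using h0
  · simpa using h1

end CommRing

variable {K : Type*} [Field K]

theorem exists_mulVec_eq_smul [IsAlgClosed K] {n : Type*} [Fintype n] [DecidableEq n]
    [Nonempty n] (A : Matrix n n K) : ∃ (c : K) (v : n → K), v ≠ 0 ∧ A *ᵥ v = c • v := by
  obtain ⟨c, hc⟩ := Module.End.exists_eigenvalue (toLin' A)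
  obtain ⟨v, hv⟩ := hc.exists_hasEigenvector
  exact ⟨c, v, hv.2, hv.apply_eq_smul⟩

theorem mulVec_mem_span_singleton_of_commute {A T : Matrix (Fin 2) (Fin 2) K} {m : K}
    (hA : A ≠ m • 1) (hAT : Commute A T) {w : Fin 2 → K} (hw : w ≠ 0) (hAw : A *ᵥ w = m • w) :
    T *ᵥ w ∈ K ∙ w := by
  set S := LinearMap.ker (toLin' (A - m • 1))
  have mem_S (u : Fin 2 → K) (hu : A *ᵥ u = m • u) : u ∈ S := by simp [S, hu]
  have hS : Module.finrank K S ≤ 1 := by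
    have hS_ne : S ≠ ⊤ := fun h =>
      hA (sub_eq_zero.1 (toLin'.map_eq_zero_iff.1 (LinearMap.ker_eq_top.1 h)))
    have := Submodule.finrank_lt hS_ne
    rw [Module.finrank_fin_fun] at this
    omega
  have hS_eq : K ∙ w = S :=
    Submodule.eq_of_le_of_finrank_le ((Submodule.span_singleton_le_iff_mem _ _).2 (mem_S w hAw))
      (by rwa [finrank_span_singleton hw])
  refine hS_eq ▸ mem_S _ ?_
  rw [mulVec_mulVec, hAT.eq, ← mulVec_mulVec, hAw, mulVec_smul]

theorem eq_smul_one_of_braid {n : Type*} [Fintype n] [DecidableEq n] [Nonempty n]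
    {A B : Matrix n n K} (hA : IsUnit A) (hB : IsUnit B) (hAB : A * B * A = B * A * B) {c : K}
    (hc : A = c • 1) : B = c • 1 := by
  have hc0 : c ≠ 0 := by
    rintro rfl
    rw [hc, zero_smul] at hA
    exact not_isUnit_zero hA
  subst hc
  have : c • (c • B) = c • (B * B) := by simpa [smul_mul_assoc, mul_smul_comm] using hAB
  refine (hB.mul_left_cancel ?_).symm
  simpa [smul_right_injective _ hc0 |>.eq_iff] using this

def NoCommonEigenvector {n : Type*} [Fintype n] (A B : Matrix n n K) : Prop :=
  ∀ (w : n → K) (a b : K), A *ᵥ w = a • w → B *ᵥ w = b • w → w = 0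

namespace NoCommonEigenvector

variable {A1 A2 : Matrix (Fin 2) (Fin 2) K} (hcommon : NoCommonEigenvector A1 A2)
include hcommon

theorem exists_isUnit_col {e f : Fin 2 → K} {a b : K} (he : e ≠ 0) (hf : f ≠ 0)
    (hA1e : A1 *ᵥ e = a • e) (hA2f : A2 *ᵥ f = b • f) :
    ∃ P : Matrix (Fin 2) (Fin 2) K, IsUnit P ∧ P.col 0 = e ∧ P.col 1 = f := by
  refine ⟨(of ![e, f])ᵀ, linearIndependent_cols_iff_isUnit.1
    ((LinearIndependent.pair_iff' he).2 fun c hc => hf (hcommon f a b ?_ hA2f)), rfl, rfl⟩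
  rw [← hc, mulVec_smul, hA1e, smul_comm]

theorem exists_braid_basis [IsAlgClosed K] (hA1 : IsUnit A1) (hA2 : IsUnit A2)
    (hbraid : A1 * A2 * A1 = A2 * A1 * A2) :
    ∃ (P : Matrix (Fin 2) (Fin 2) K) (l1 l2 : K), IsUnit P ∧ l1 ≠ 0 ∧
      A1 *ᵥ P.col 0 = l1 • P.col 0 ∧ A1 *ᵥ P.col 1 = l1 • P.col 0 + l2 • P.col 1 ∧
      A2 *ᵥ P.col 1 = l1 • P.col 1 := by
  obtain ⟨l1, e₀, he₀, hA1e₀⟩ := exists_mulVec_eq_smul A1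
  have hl1 : l1 ≠ 0 := by
    rintro rfl
    exact he₀ (mulVec_injective_of_isUnit hA1 (by rw [hA1e₀, zero_smul, mulVec_zero]))
  set f := (A1 * A2 * A1) *ᵥ e₀
  have hf : f ≠ 0 := fun h =>
    he₀ (mulVec_injective_of_isUnit ((hA1.mul hA2).mul hA1) (by rw [mulVec_zero]; exact h))
  have hA2f : A2 *ᵥ f = l1 • f := by
    rw [mulVec_mulVec, ← mul_assoc, ← mul_assoc, ← hbraid, ← mulVec_mulVec, hA1e₀, mulVec_smul]
  obtain ⟨P₀, hP₀, hP₀e, hP₀f⟩ := hcommon.exists_isUnit_col he₀ hf hA1e₀ hA2f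
  obtain ⟨α, l2, hA1f⟩ := exists_eq_smul_col_add_smul_col hP₀ (A1 *ᵥ f)
  rw [hP₀e, hP₀f] at hA1f
  have hα : α ≠ 0 := by
    rintro rfl
    refine hf (hcommon f l2 l1 ?_ hA2f)
    rwa [zero_smul, zero_add] at hA1f
  set e := (α / l1) • e₀
  have hA1e : A1 *ᵥ e = l1 • e := by rw [mulVec_smul, hA1e₀, smul_comm]
  obtain ⟨P, hP, hPe, hPf⟩ :=
    hcommon.exists_isUnit_col (smul_ne_zero (div_ne_zero hα hl1) he₀) hf hA1e hA2f
  refine ⟨P, l1, l2, hP, hl1, hPe ▸ hA1e, ?_, hPf ▸ hA2f⟩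
  rw [hPe, hPf, hA1f, smul_smul, mul_div_cancel₀ _ hl1]

end NoCommonEigenvector

theorem braid_normal_form_eq {l1 l2 g d : K} (hl1 : l1 ≠ 0) (hl2 : l2 ≠ 0)
    (h : !![l1, l1; 0, l2] * !![g, 0; d, l1] * !![l1, l1; 0, l2] =
      !![g, 0; d, l1] * !![l1, l1; 0, l2] * !![g, 0; d, l1]) :
    g = l2 ∧ d = -l2 := by
  simp only [mul_fin_two] at h
  have h01 := congrFun (congrFun h 0) 1
  have h10 := congrFun (congrFun h 1) 0
  simp only [of_apply, cons_val', cons_val_zero, cons_val_one, empty_val', cons_val_fin_one]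
    at h01 h10
  have hd : d = -l2 := by
    have : l1 * l1 * (d + l2) = 0 := by linear_combination h01
    simpa [hl1, add_eq_zero_iff_eq_neg] using this
  refine ⟨?_, hd⟩
  subst hd
  have : l1 * l2 * (g - l2) = 0 := by linear_combination h10
  simpa [hl1, hl2, sub_eq_zero] using this

theorem NoCommonEigenvector.exists_conj_braid_normal_form [IsAlgClosed K]
    {A1 A2 : Matrix (Fin 2) (Fin 2) K} (hcommon : NoCommonEigenvector A1 A2)
    (hA1 : IsUnit A1) (hA2 : IsUnit A2) (hbraid : A1 * A2 * A1 = A2 * A1 * A2) :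
    ∃ (P : Matrix (Fin 2) (Fin 2) K) (l1 l2 : K), IsUnit P ∧ l1 ≠ 0 ∧ l2 ≠ 0 ∧
      P⁻¹ * A1 * P = !![l1, l1; 0, l2] ∧ P⁻¹ * A2 * P = !![l2, 0; -l2, l1] := by
  obtain ⟨P, l1, l2, hP, hl1, hA1e, hA1f, hA2f⟩ := hcommon.exists_braid_basis hA1 hA2 hbraid
  obtain ⟨g, d, hA2e⟩ := exists_eq_smul_col_add_smul_col hP (A2 *ᵥ P.col 0)
  have hA1P : P⁻¹ * A1 * P = !![l1, l1; 0, l2] :=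
    inv_mul_mul_eq_of_mulVec_col hP (by simpa using hA1e) hA1f
  have hA2P : P⁻¹ * A2 * P = !![g, 0; d, l1] :=
    inv_mul_mul_eq_of_mulVec_col hP hA2e (by simpa using hA2f)
  have hl2 : l2 ≠ 0 := by
    have := (isUnit_iff_isUnit_det A1).1 hA1
    rw [← det_conj' hP, hA1P, det_fin_two_of, mul_zero, sub_zero] at this
    exact right_ne_zero_of_mul this.ne_zero
  have hbraidP := congrArg (fun X => P⁻¹ * X * P) hbraid
  simp only [conj_mul_of_isUnit hP, hA1P, hA2P] at hbraidP
  obtain ⟨rfl, rfl⟩ := braid_normal_form_eq hl1 hl2 hbraidP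
  exact ⟨P, l1, g, hP, hl1, hl2, hA1P, hA2P⟩

theorem exists_tau_normal_form {l1 l2 : K} (hl1 : l1 ≠ 0) (hl2 : l2 ≠ 0)
    {S1 S2 : Matrix (Fin 2) (Fin 2) K}
    (h1 : !![l1, l1; 0, l2] * S1 = S1 * !![l1, l1; 0, l2])
    (h3 : !![l1, l1; 0, l2] * !![l2, 0; -l2, l1] * S1 =
      S2 * (!![l1, l1; 0, l2] * !![l2, 0; -l2, l1])) :
    ∃ a1 b1 : K, S1 = !![a1, b1; 0, a1 - b1 * (l1 - l2) / l1] ∧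
      S2 = !![a1 - b1 * (l1 - l2) / l1, 0; -(b1 * l2 / l1), a1] := by
  rw [eta_fin_two S1, mul_fin_two, mul_fin_two] at h1
  have h00 := congrFun (congrFun h1 0) 0
  have h01 := congrFun (congrFun h1 0) 1
  simp only [of_apply, cons_val', cons_val_zero, cons_val_one, empty_val', cons_val_fin_one]
    at h00 h01
  have h10 : S1 1 0 = 0 := by
    have : l1 * S1 1 0 = 0 := by linear_combination h00
    simpa [hl1] using this
  have h11 : S1 1 1 = S1 0 0 - S1 0 1 * (l1 - l2) / l1 := by
    field_simp
    linear_combination h01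
  have hS1 : S1 = !![S1 0 0, S1 0 1; 0, S1 0 0 - S1 0 1 * (l1 - l2) / l1] := by
    rw [← h10, ← h11, ← eta_fin_two]
  refine ⟨S1 0 0, S1 0 1, hS1, ?_⟩
  have hM : IsUnit (!![l1, l1; 0, l2] * !![l2, 0; -l2, l1]) := by
    simp [isUnit_iff_isUnit_det, det_fin_two, hl1, hl2]
  refine hM.mul_right_cancel (h3.symm.trans ?_)
  rw [hS1]
  ext i j
  fin_cases i <;> fin_cases j <;> simp <;> field_simp
  ring

def IsIrreducibleRep (A1 A2 T1 T2 : Matrix (Fin 2) (Fin 2) K) : Prop :=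
  ∀ V : Submodule K (Fin 2 → K),
    ((∀ v ∈ V, A1 *ᵥ v ∈ V) ∧ (∀ v ∈ V, A2 *ᵥ v ∈ V) ∧
      (∀ v ∈ V, T1 *ᵥ v ∈ V) ∧ (∀ v ∈ V, T2 *ᵥ v ∈ V)) → V = ⊥ ∨ V = ⊤

namespace IsIrreducibleRep

variable {A1 A2 T1 T2 : Matrix (Fin 2) (Fin 2) K} (hirr : IsIrreducibleRep A1 A2 T1 T2)
include hirr

theorem eq_zero_of_mulVec_mem_span {w : Fin 2 → K} (h1 : A1 *ᵥ w ∈ K ∙ w)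
    (h2 : A2 *ᵥ w ∈ K ∙ w) (h3 : T1 *ᵥ w ∈ K ∙ w) (h4 : T2 *ᵥ w ∈ K ∙ w) : w = 0 := by
  have invariant (M : Matrix (Fin 2) (Fin 2) K) (hM : M *ᵥ w ∈ K ∙ w) :
      ∀ v ∈ K ∙ w, M *ᵥ v ∈ K ∙ w := by
    intro v hv
    obtain ⟨c, rfl⟩ := Submodule.mem_span_singleton.1 hv
    rw [mulVec_smul]
    exact Submodule.smul_mem (K ∙ w) c hM
  by_contra hw
  rcases hirr _ ⟨invariant _ h1, invariant _ h2, invariant _ h3, invariant _ h4⟩ with h | h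
  · exact hw (Submodule.span_singleton_eq_bot.1 h)
  · have := finrank_span_singleton (K := K) hw
    rw [h, finrank_top, Module.finrank_fin_fun] at this
    exact absurd this (by norm_num)

theorem ne_smul_one [IsAlgClosed K] (hA1 : IsUnit A1) (hA2 : IsUnit A2)
    (hbraid : A1 * A2 * A1 = A2 * A1 * A2) (r3 : A1 * A2 * T1 = T2 * (A1 * A2)) (c : K) :
    A1 ≠ c • 1 := by
  intro hc
  have hA2c := eq_smul_one_of_braid hA1 hA2 hbraid hc
  have hT : T1 = T2 := by
    refine (hA1.mul hA2).mul_left_cancel (r3.trans ?_)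
    simp [hc, hA2c]
  obtain ⟨μ, w, hw, hT1w⟩ := exists_mulVec_eq_smul T1
  have hT1 : T1 *ᵥ w ∈ K ∙ w := Submodule.mem_span_singleton.2 ⟨μ, hT1w.symm⟩
  have hscalar : (c • 1 : Matrix (Fin 2) (Fin 2) K) *ᵥ w ∈ K ∙ w :=
    Submodule.mem_span_singleton.2 ⟨c, by rw [smul_mulVec, one_mulVec]⟩
  exact hw (hirr.eq_zero_of_mulVec_mem_span (hc ▸ hscalar) (hA2c ▸ hscalar) hT1 (hT ▸ hT1))

theorem noCommonEigenvector (hA1 : ∀ c : K, A1 ≠ c • 1) (hA2 : ∀ c : K, A2 ≠ c • 1)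
    (r1 : Commute A1 T1) (r2 : Commute A2 T2) : NoCommonEigenvector A1 A2 := by
  intro w a b h1 h2
  by_contra hw
  exact hw (hirr.eq_zero_of_mulVec_mem_span (Submodule.mem_span_singleton.2 ⟨a, h1.symm⟩)
    (Submodule.mem_span_singleton.2 ⟨b, h2.symm⟩)
    (mulVec_mem_span_singleton_of_commute (hA1 a) r1 hw h1)
    (mulVec_mem_span_singleton_of_commute (hA2 b) r2 hw h2))

theorem discr_ne_zero {P : Matrix (Fin 2) (Fin 2) K} (hP : IsUnit P) {l1 l2 a1 b1 : K}
    (hl1 : l1 ≠ 0) (h1 : P⁻¹ * A1 * P = !![l1, l1; 0, l2])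
    (h2 : P⁻¹ * A2 * P = !![l2, 0; -l2, l1])
    (h3 : P⁻¹ * T1 * P = !![a1, b1; 0, a1 - b1 * (l1 - l2) / l1])
    (h4 : P⁻¹ * T2 * P = !![a1 - b1 * (l1 - l2) / l1, 0; -(b1 * l2 / l1), a1]) :
    l1 ^ 2 + l2 ^ 2 - l1 * l2 ≠ 0 := by
  intro h0
  set u : Fin 2 → K := ![l1, l2 - l1]
  have line {M B : Matrix (Fin 2) (Fin 2) K} (c : K) (hMB : P⁻¹ * M * P = B)
      (hu : B *ᵥ u = c • u) : M *ᵥ (P *ᵥ u) ∈ K ∙ (P *ᵥ u) := by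
    refine Submodule.mem_span_singleton.2 ⟨c, ?_⟩
    rw [← mulVec_smul, ← hu, ← hMB, mulVec_mulVec, mulVec_mulVec, ← mul_assoc, ← mul_assoc,
      mul_nonsing_inv P ((isUnit_iff_isUnit_det P).1 hP), one_mul]
  have hA1u : !![l1, l1; 0, l2] *ᵥ u = l2 • u := by
    ext i; fin_cases i <;> simp [u] <;> ring
  have hA2u : !![l2, 0; -l2, l1] *ᵥ u = l2 • u := by
    ext i; fin_cases i
    · simp [u]; ring
    · simp [u]; linear_combination -h0
  have hT1u : !![a1, b1; 0, a1 - b1 * (l1 - l2) / l1] *ᵥ u = (a1 - b1 * (l1 - l2) / l1) • u := by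
    ext i; fin_cases i <;> simp [u] <;> field_simp
    ring
  have hT2u : !![a1 - b1 * (l1 - l2) / l1, 0; -(b1 * l2 / l1), a1] *ᵥ u =
      (a1 - b1 * (l1 - l2) / l1) • u := by
    ext i; fin_cases i <;> simp [u] <;> field_simp
    linear_combination -b1 * h0
  have hPu := hirr.eq_zero_of_mulVec_mem_span (line _ h1 hA1u) (line _ h2 hA2u) (line _ h3 hT1u)
    (line _ h4 hT2u)
  have hu : u = 0 := mulVec_injective_of_isUnit hP (by rw [hPu, mulVec_zero])
  exact hl1 (congrFun hu 0)

end IsIrreducibleRep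

theorem SB3_dim2_irreducible_classification_general
    (A1 A2 T1 T2 : Matrix (Fin 2) (Fin 2) ℂ)
    (hA1 : IsUnit A1) (hA2 : IsUnit A2) (hT1 : IsUnit T1)
    (rbraid : A1 * A2 * A1 = A2 * A1 * A2)
    (r1 : A1 * T1 = T1 * A1) (r2 : A2 * T2 = T2 * A2)
    (r3 : A1 * A2 * T1 = T2 * (A1 * A2))
    (hirr : ∀ V : Submodule ℂ (Fin 2 → ℂ),
        ((∀ v ∈ V, A1.mulVec v ∈ V) ∧ (∀ v ∈ V, A2.mulVec v ∈ V) ∧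
         (∀ v ∈ V, T1.mulVec v ∈ V) ∧ (∀ v ∈ V, T2.mulVec v ∈ V)) →
        V = ⊥ ∨ V = ⊤) :
    ∃ (P : Matrix (Fin 2) (Fin 2) ℂ) (l1 l2 a1 b1 : ℂ), IsUnit P ∧
      l1 ≠ 0 ∧ l2 ≠ 0 ∧ l1 ^ 2 + l2 ^ 2 - l1 * l2 ≠ 0 ∧
      a1 ≠ 0 ∧ a1 - b1 * (l1 - l2) / l1 ≠ 0 ∧
      P⁻¹ * A1 * P = !![l1, l1; 0, l2] ∧
      P⁻¹ * A2 * P = !![l2, 0; -l2, l1] ∧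
      P⁻¹ * T1 * P = !![a1, b1; 0, a1 - b1 * (l1 - l2) / l1] ∧
      P⁻¹ * T2 * P = !![a1 - b1 * (l1 - l2) / l1, 0; -(b1 * l2 / l1), a1] := by
  have hirr : IsIrreducibleRep A1 A2 T1 T2 := hirr
  have hA1_ne := hirr.ne_smul_one hA1 hA2 rbraid r3
  have hA2_ne (c : ℂ) : A2 ≠ c • 1 := fun hc =>
    hA1_ne c (eq_smul_one_of_braid hA2 hA1 rbraid.symm hc)
  obtain ⟨P, l1, l2, hP, hl1, hl2, hA1P, hA2P⟩ :=
    (hirr.noCommonEigenvector hA1_ne hA2_ne r1 r2).exists_conj_braid_normal_form hA1 hA2 rbraid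
  have r1P := congrArg (fun X => P⁻¹ * X * P) r1
  have r3P := congrArg (fun X => P⁻¹ * X * P) r3
  simp only [conj_mul_of_isUnit hP, hA1P, hA2P] at r1P r3P
  obtain ⟨a1, b1, hT1P, hT2P⟩ := exists_tau_normal_form hl1 hl2 r1P r3P
  have hdetT1 : a1 * (a1 - b1 * (l1 - l2) / l1) ≠ 0 := by
    have := (isUnit_iff_isUnit_det T1).1 hT1
    rwa [← det_conj' hP, hT1P, det_fin_two_of, mul_zero, sub_zero, isUnit_iff_ne_zero] at this
  exact ⟨P, l1, l2, a1, b1, hP, hl1, hl2, hirr.discr_ne_zero hP hl1 hA1P hA2P hT1P hT2P,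
    left_ne_zero_of_mul hdetT1, right_ne_zero_of_mul hdetT1, hA1P, hA2P, hT1P, hT2P⟩

/-- Corollary 4.6: every irreducible representation `SB₃ → GL₂(ℂ)` is equivalent to one of
the representations obtained in Theorem 4.3. -/
theorem SB3_dim2_irreducible_classification
    (A1 A2 T1 T2 : Matrix (Fin 2) (Fin 2) ℂ)
    (hA1 : IsUnit A1) (hA2 : IsUnit A2) (hT1 : IsUnit T1) (hT2 : IsUnit T2)
    (rbraid : A1 * A2 * A1 = A2 * A1 * A2)
    (r1 : A1 * T1 = T1 * A1) (r2 : A2 * T2 = T2 * A2)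
    (r3 : A1 * A2 * T1 = T2 * (A1 * A2)) (r4 : A2 * A1 * T2 = T1 * (A2 * A1))
    (hirr : ∀ V : Submodule ℂ (Fin 2 → ℂ),
        ((∀ v ∈ V, A1.mulVec v ∈ V) ∧ (∀ v ∈ V, A2.mulVec v ∈ V) ∧
         (∀ v ∈ V, T1.mulVec v ∈ V) ∧ (∀ v ∈ V, T2.mulVec v ∈ V)) →
        V = ⊥ ∨ V = ⊤) :
    ∃ (P : Matrix (Fin 2) (Fin 2) ℂ) (l1 l2 a1 b1 : ℂ), IsUnit P ∧
      l1 ≠ 0 ∧ l2 ≠ 0 ∧ l1 ^ 2 + l2 ^ 2 - l1 * l2 ≠ 0 ∧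
      a1 ≠ 0 ∧ a1 - b1 * (l1 - l2) / l1 ≠ 0 ∧
      P⁻¹ * A1 * P = !![l1, l1; 0, l2] ∧
      P⁻¹ * A2 * P = !![l2, 0; -l2, l1] ∧
      P⁻¹ * T1 * P = !![a1, b1; 0, a1 - b1 * (l1 - l2) / l1] ∧
      P⁻¹ * T2 * P = !![a1 - b1 * (l1 - l2) / l1, 0; -(b1 * l2 / l1), a1] :=
  SB3_dim2_irreducible_classification_general A1 A2 T1 T2 hA1 hA2 hT1 rbraid r1 r2 r3 hirr
end

section
/- Let λ₁, λ₂, λ₃ ∈ ℂ be nonzero with (λ₁² + λ₂λ₃)(λ₂² + λ₁λ₃)(λ₃² + λ₁λ₂) ≠ 0 and λ₂ ≠ −λ₃, and set S₁ = [[λ₁, λ₁λ₂⁻¹λ₃ + λ₂, λ₂],[0, λ₂, λ₂],[0, 0, λ₃]] and S₂ = [[λ₃, 0, 0],[−λ₂, λ₂, 0],[λ₂, −λ₁λ₂⁻¹λ₃ − λ₂, λ₁]]. Suppose T₁ and T₂ are invertible 3×3 complex matrices satisfying T₁S₁ = S₁T₁, T₂S₂ = S₂T₂, S₁S₂T₁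 = T₂S₁S₂, and S₂S₁T₂ = T₁S₂S₁. Then there exist c₁, e₁, f₁ ∈ ℂ such that, with a₁ = (c₁λ₂(λ₁−λ₂)(λ₁−λ₃) + e₁λ₁λ₂(λ₂+λ₃) + f₁λ₃(λ₁−λ₂)(λ₁+λ₂)) / (λ₁λ₂(λ₂+λ₃)), b₁ = (λ₁λ₃ + λ₂²)(c₁λ₂(λ₁−λ₃) + f₁λ₃(λ₁+λ₂)) / (λ₁λ₂²(λ₂+λ₃)), and i₁ = e₁ + f₁(λ₃/λ₂ − 1), one has T₁ = [[a₁, b₁, c₁],[0, e₁, f₁],[0, 0, i₁]] and T₂ = [[i₁, 0, 0],[−f₁, e₁, 0],[c₁, −b₁, a₁]]. -/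
open Matrix

set_option maxHeartbeats 2000000 in
/-- Theorem 4.8: classification of the extensions to `SB₃` of the Tuba–Wenzl irreducible
representations `μ : B₃ → GL₃(ℂ)`. -/
theorem SB3_dim3_extension_classification (l1 l2 l3 : ℂ)
    (h1 : l1 ≠ 0) (h2 : l2 ≠ 0) (h3 : l3 ≠ 0)
    (h4 : (l1 ^ 2 + l2 * l3) * (l2 ^ 2 + l1 * l3) * (l3 ^ 2 + l1 * l2) ≠ 0)
    (h5 : l2 ≠ -l3)
    (T1 T2 : Matrix (Fin 3) (Fin 3) ℂ) (hT1 : IsUnit T1) (hT2 : IsUnit T2)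
    (r1 : T1 * !![l1, l1 * l2⁻¹ * l3 + l2, l2; 0, l2, l2; 0, 0, l3]
        = !![l1, l1 * l2⁻¹ * l3 + l2, l2; 0, l2, l2; 0, 0, l3] * T1)
    (r2 : T2 * !![l3, 0, 0; -l2, l2, 0; l2, -(l1 * l2⁻¹ * l3) - l2, l1]
        = !![l3, 0, 0; -l2, l2, 0; l2, -(l1 * l2⁻¹ * l3) - l2, l1] * T2)
    (r3 : !![l1, l1 * l2⁻¹ * l3 + l2, l2; 0, l2, l2; 0, 0, l3]
          * !![l3, 0, 0; -l2, l2, 0; l2, -(l1 * l2⁻¹ * l3) - l2, l1] * T1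
        = T2 * (!![l1, l1 * l2⁻¹ * l3 + l2, l2; 0, l2, l2; 0, 0, l3]
          * !![l3, 0, 0; -l2, l2, 0; l2, -(l1 * l2⁻¹ * l3) - l2, l1]))
    (r4 : !![l3, 0, 0; -l2, l2, 0; l2, -(l1 * l2⁻¹ * l3) - l2, l1]
          * !![l1, l1 * l2⁻¹ * l3 + l2, l2; 0, l2, l2; 0, 0, l3] * T2
        = T1 * (!![l3, 0, 0; -l2, l2, 0; l2, -(l1 * l2⁻¹ * l3) - l2, l1]
          * !![l1, l1 * l2⁻¹ * l3 + l2, l2; 0, l2, l2; 0, 0, l3])) :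
    ∃ c1 e1 f1 : ℂ,
      T1 = !![(c1 * l2 * (l1 - l2) * (l1 - l3) + e1 * l1 * l2 * (l2 + l3)
                 + f1 * l3 * (l1 - l2) * (l1 + l2)) / (l1 * l2 * (l2 + l3)),
              (l1 * l3 + l2 ^ 2) * (c1 * l2 * (l1 - l3) + f1 * l3 * (l1 + l2))
                 / (l1 * l2 ^ 2 * (l2 + l3)),
              c1;
              0, e1, f1;
              0, 0, e1 + f1 * (l3 / l2 - 1)] ∧
      T2 = !![e1 + f1 * (l3 / l2 - 1), 0, 0;
              -f1, e1, 0;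
              c1,
              -((l1 * l3 + l2 ^ 2) * (c1 * l2 * (l1 - l3) + f1 * l3 * (l1 + l2))
                 / (l1 * l2 ^ 2 * (l2 + l3))),
              (c1 * l2 * (l1 - l2) * (l1 - l3) + e1 * l1 * l2 * (l2 + l3)
                 + f1 * l3 * (l1 - l2) * (l1 + l2)) / (l1 * l2 * (l2 + l3))] := by
  have hv : l2 * l2⁻¹ = 1 := mul_inv_cancel₀ h2
  have hB : l2 ^ 2 + l1 * l3 ≠ 0 := fun hh => h4 (by rw [hh]; ring)
  have hC : l3 ^ 2 + l1 * l2 ≠ 0 := fun hh => h4 (by rw [hh]; ring)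
  have h23 : l2 + l3 ≠ 0 := fun hh => h5 (by linear_combination hh)
  have hK : l1 * l2 * (l2 + l3) ≠ 0 := mul_ne_zero (mul_ne_zero h1 h2) h23
  have hK2 : l1 * l2 ^ 2 * (l2 + l3) ≠ 0 := mul_ne_zero (mul_ne_zero h1 (pow_ne_zero 2 h2)) h23
  have E1_20 := congrFun (congrFun r1 2) 0
  have E1_21 := congrFun (congrFun r1 2) 1
  have E1_22 := congrFun (congrFun r1 2) 2
  have E4_22 := congrFun (congrFun r4 2) 2
  have E2_00 := congrFun (congrFun r2 0) 0
  have E1_00 := congrFun (congrFun r1 0) 0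
  have E2_11 := congrFun (congrFun r2 1) 1
  have E1_12 := congrFun (congrFun r1 1) 2
  have E3_11 := congrFun (congrFun r3 1) 1
  have E3_02 := congrFun (congrFun r3 0) 2
  have E3_12 := congrFun (congrFun r3 1) 2
  have E4_02 := congrFun (congrFun r4 0) 2
  have E1_01 := congrFun (congrFun r1 0) 1
  have E1_02 := congrFun (congrFun r1 0) 2
  have E4_01 := congrFun (congrFun r4 0) 1
  have E3_22 := congrFun (congrFun r3 2) 2
  simp [Matrix.mul_apply, Fin.sum_univ_three, Matrix.vecHead, Matrix.vecTail] at E1_20 E1_21 E1_22 E4_22 E2_00 E1_00 E2_11 E1_12 E3_11 E3_02 E3_12 E4_02 E1_01 E1_02 E4_01 E3_22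
  have kf1 : (l2 * l3 * (l3 ^ 2 + l1 * l2)) * (T1 2 0) = 0 := by linear_combination (norm := ring1) (-l2*l3^2 - l1*l2*l3) * E1_20 + (l1*l2^2) * E1_21 + (l1*l2*l3 - l1*l2^2) * E1_22 + ((-l1^2*l2*l3) * T1 2 0) * hv
  have f1 : T1 2 0 = 0 := by
    rcases mul_eq_zero.mp kf1 with hh | hh
    · exact absurd hh (mul_ne_zero (mul_ne_zero h2 h3) hC)
    · exact hh
  have kf2 : (l2 * l2) * (T1 2 1) = 0 := by linear_combination (norm := ring1) (l2) * E1_22 + (-l2^2) * f1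
  have f2 : T1 2 1 = 0 := by
    rcases mul_eq_zero.mp kf2 with hh | hh
    · exact absurd hh (mul_ne_zero h2 h2)
    · exact hh
  have kf3 : (l1 * l2) * (T2 0 2) = 0 := by linear_combination (norm := ring1) (1) * E4_22 + (l2*l3) * f1 + ((l1*l3) * T2 2 2) * hv + ((-l1*l3) * T1 2 2) * hv
  have f3 : T2 0 2 = 0 := by
    rcases mul_eq_zero.mp kf3 with hh | hh
    · exact absurd hh (mul_ne_zero h1 h2)
    · exact hh
  have kf4 : (l2) * (T2 0 1) = 0 := by linear_combination (norm := ring1) (-1) * E2_00 + (l2) * f3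
  have f4 : T2 0 1 = 0 := by
    rcases mul_eq_zero.mp kf4 with hh | hh
    · exact absurd hh (h2)
    · exact hh
  have kf5 : (l2 ^ 2 + l1 * l3) * (T1 1 0) = 0 := by linear_combination (norm := ring1) (-l2) * E1_00 + (-l2^2) * f1 + ((-l1*l3) * T1 1 0) * hv
  have f5 : T1 1 0 = 0 := by
    rcases mul_eq_zero.mp kf5 with hh | hh
    · exact absurd hh (hB)
    · exact hh
  have kf6 : (l2 ^ 2 + l1 * l3) * (T2 1 2) = 0 := by linear_combination (norm := ring1) (-l2) * E2_11 + (l2^2) * f4 + ((-l1*l3) * T2 1 2) * hv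
  have f6 : T2 1 2 = 0 := by
    rcases mul_eq_zero.mp kf6 with hh | hh
    · exact absurd hh (hB)
    · exact hh
  have f7 : (-l2) * T1 1 1 + (-l3 + l2) * T1 1 2 + (l2) * T1 2 2 = 0 := by linear_combination (norm := ring1) (-1) * E1_12 + (l2) * f5
  have kf8 : (l1 * l3) * ((-1) * T1 1 1 + T2 1 1) = 0 := by linear_combination (norm := ring1) (1) * E3_11 + (-l1*l2) * f2 + (-l2*l3 - l1*l3^2*l2⁻¹) * f6 + ((-l1*l3) * T2 1 1) * hv + ((l1*l3) * T1 1 1) * hv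
  have f8 : (-1) * T1 1 1 + T2 1 1 = 0 := by
    rcases mul_eq_zero.mp kf8 with hh | hh
    · exact absurd hh (mul_ne_zero h1 h3)
    · exact hh
  have kf9 : (l1 * l2) * ((-1) * T1 2 2 + T2 0 0) = 0 := by linear_combination (norm := ring1) (-1) * E3_02 + (-l1*l2) * f4 + (-l1*l3) * f3 + ((-l1*l3) * T1 0 2) * hv
  have f9 : (-1) * T1 2 2 + T2 0 0 = 0 := by
    rcases mul_eq_zero.mp kf9 with hh | hh
    · exact absurd hh (mul_ne_zero h1 h2)
    · exact hh
  have kf10 : (l1 * l2) * (T1 1 2 + T2 1 0) = 0 := by linear_combination (norm := ring1) (-1) * E3_12 + (-l1*l2) * f8 + (-l1*l3) * f6 + (l1) * f7 + ((-l1*l3) * T1 1 2) * hv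
  have f10 : T1 1 2 + T2 1 0 = 0 := by
    rcases mul_eq_zero.mp kf10 with hh | hh
    · exact absurd hh (mul_ne_zero h1 h2)
    · exact hh
  have kf11 : (l2 * l3) * ((-1) * T1 0 0 + T2 2 2) = 0 := by linear_combination (norm := ring1) (1) * E4_02 + (-l1*l3) * f3 + (-l2*l3 - l1*l3^2*l2⁻¹) * f6 + ((-l1*l3) * T1 0 2) * hv
  have f11 : (-1) * T1 0 0 + T2 2 2 = 0 := by
    rcases mul_eq_zero.mp kf11 with hh | hh
    · exact absurd hh (mul_ne_zero h2 h3)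
    · exact hh
  have f12 : (l1*l2^2*l3 + l1*l2^3) * T1 0 1 + (l2^3*l3 + l1*l2*l3^2 - l1*l2^3 - l1^2*l2*l3) * T1 0 2 + (-l2^3*l3 - l1*l2*l3^2 - l1*l2^2*l3 - l1^2*l3^2) * T1 1 2 = 0 := by linear_combination (norm := ring1) (-l2^3) * E1_01 + (l2^3 + l1*l2*l3) * E1_02 + (l2^3 + l1*l2*l3) * f7 + (-l2^4) * f2 + ((l1*l2^2*l3 + l1^2*l3^2) * T1 1 2) * hv + ((l1*l2^2*l3) * T1 0 0) * hv + ((-l1*l2^2*l3) * T1 1 1) * hv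
  have kf13 : (l2 ^ 2 + l1 * l3) * ((l1*l2*l3 + l1*l2^2) * T1 0 0 + (-l2^2*l3 + l1*l2*l3 + l1*l2^2 - l1^2*l2) * T1 0 2 + (-l1*l2*l3 - l1*l2^2) * T1 1 1 + (l2^2*l3 - l1^2*l3) * T1 1 2) = 0 := by linear_combination (norm := ring1) (l1*l2^2*l3 + l1*l2^3) * E1_01 + (l1*l2^3*l3 + l1*l2^4) * f2 + (-l2 + l1) * f12 + ((-l1^2*l2*l3^2 - l1^2*l2^2*l3) * T1 0 0) * hv + ((l1^2*l2*l3^2 + l1^2*l2^2*l3) * T1 1 1) * hv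
  have f13 : (l1*l2*l3 + l1*l2^2) * T1 0 0 + (-l2^2*l3 + l1*l2*l3 + l1*l2^2 - l1^2*l2) * T1 0 2 + (-l1*l2*l3 - l1*l2^2) * T1 1 1 + (l2^2*l3 - l1^2*l3) * T1 1 2 = 0 := by
    rcases mul_eq_zero.mp kf13 with hh | hh
    · exact absurd hh (hB)
    · exact hh
  have kf14 : (l2 * l2 * l3) * (T1 0 1 + T2 2 1) = 0 := by linear_combination (norm := ring1) (l2) * E4_01 + (l2*l3) * E1_01 + (-l1*l2*l3) * f4 + (-l2^2*l3 - l1*l3^2) * f8 + (l2^2*l3) * f2 + ((-l1*l2*l3) * T1 0 1) * hv + ((-l1*l3^2) * T2 1 1) * hv + ((l1*l3^2) * T1 1 1) * hv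
  have f14 : T1 0 1 + T2 2 1 = 0 := by
    rcases mul_eq_zero.mp kf14 with hh | hh
    · exact absurd hh (mul_ne_zero (mul_ne_zero h2 h2) h3)
    · exact hh
  have kf15 : (l1 * l2 * l2 * l2 * (l2 + l3)) * ((-1) * T1 0 2 + T2 2 0) = 0 := by linear_combination (norm := ring1) (-l2^2*l3 - l2^3) * E3_22 + (-l1*l2^3*l3 - l1*l2^4) * f14 + (-l1*l2^2*l3^2 - l1*l2^3*l3) * f11 + (2*l1*l2*l3^2 + 2*l1*l2^2*l3 - l1*l2^2*l3^2*l2⁻¹ - l1*l2^3*l3*l2⁻¹) * f7 + (l2) * f12 + (-l2*l3) * f13 + ((-2*l1*l2*l3^3 - l1*l2^2*l3^2 + l1*l2^3*l3) * T1 1 2) * hv + ((l1*l2^2*l3^2 + l1*l2^3*l3) * T1 2 2) * hv + ((-l1*l2^2*l3^2 - l1*l2^3*l3) * T1 1 1) * hv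
  have f15 : (-1) * T1 0 2 + T2 2 0 = 0 := by
    rcases mul_eq_zero.mp kf15 with hh | hh
    · exact absurd hh (mul_ne_zero (mul_ne_zero (mul_ne_zero (mul_ne_zero h1 h2) h2) h2) h23)
    · exact hh
  refine ⟨T1 0 2, T1 1 1, T1 1 2, ?_, ?_⟩
  · ext x y
    fin_cases x <;> fin_cases y <;> simp [Matrix.vecHead, Matrix.vecTail]
    · rw [eq_div_iff hK]; linear_combination f13
    · rw [eq_div_iff hK2]; linear_combination f12
    · exact f5
    · exact f1
    · exact f2
    · field_simp
      linear_combination f7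
  · ext x y
    fin_cases x <;> fin_cases y <;> simp [Matrix.vecHead, Matrix.vecTail]
    · field_simp
      linear_combination l2 * f9 + f7
    · exact f4
    · exact f3
    · linear_combination f10
    · linear_combination f8
    · exact f6
    · linear_combination f15
    · rw [← neg_div, eq_div_iff hK2]; linear_combination (l1 * l2 ^ 2 * (l2 + l3)) * f14 - f12
    · rw [eq_div_iff hK]; linear_combination (l1 * l2 * (l2 + l3)) * f11 + f13
end

section
/- Let λ₁, λ₂, λ₃, c₁, e₁, f₁ ∈ ℂ with λ₁, λ₂, λ₃ nonzero, (λ₁² + λ₂λ₃)(λ₂² + λ₁λ₃)(λ₃² + λ₁λ₂) ≠ 0, and λ₂ ≠ −λ₃. Set S₁ = [[λ₁, λ₁λ₂⁻¹λ₃ + λ₂, λ₂],[0, λ₂, λ₂],[0, 0, λ₃]], S₂ = [[λ₃, 0, 0],[−λ₂, λ₂, 0],[λ₂, −λ₁λ₂⁻¹λ₃ − λ₂, λ₁]], and, with a₁ = (c₁λ₂(λ₁−λ₂)(λ₁−λ₃) + e₁λ₁λ₂(λ₂+λ₃) + f₁λ₃(λ₁−λ₂)(λ₁+λ₂)) / (λ₁λ₂(λ₂+λ₃)),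 b₁ = (λ₁λ₃ + λ₂²)(c₁λ₂(λ₁−λ₃) + f₁λ₃(λ₁+λ₂)) / (λ₁λ₂²(λ₂+λ₃)), i₁ = e₁ + f₁(λ₃/λ₂ − 1), set T₁ = [[a₁, b₁, c₁],[0, e₁, f₁],[0, 0, i₁]] and T₂ = [[i₁, 0, 0],[−f₁, e₁, 0],[c₁, −b₁, a₁]]. Assume a₁ ≠ 0, e₁ ≠ 0, and i₁ ≠ 0 (so T₁ and T₂ are invertible). Then the only subspaces V of ℂ³ with S₁V ⊆ V, S₂V ⊆ V, T₁V ⊆ V, and T₂V ⊆ V are V = 0 and V = ℂ³. -/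
open Matrix

set_option maxHeartbeats 1000000

/-- Corollary 4.9: the representations `ρ : SB₃ → GL₃(ℂ)` determined in Theorem 4.8
are irreducible. -/
theorem SB3_dim3_extension_irreducible (l1 l2 l3 c1 e1 f1 : ℂ)
    (h1 : l1 ≠ 0) (h2 : l2 ≠ 0) (h3 : l3 ≠ 0)
    (h4 : (l1 ^ 2 + l2 * l3) * (l2 ^ 2 + l1 * l3) * (l3 ^ 2 + l1 * l2) ≠ 0)
    (h5 : l2 ≠ -l3)
    (ha1 : (c1 * l2 * (l1 - l2) * (l1 - l3) + e1 * l1 * l2 * (l2 + l3)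
             + f1 * l3 * (l1 - l2) * (l1 + l2)) / (l1 * l2 * (l2 + l3)) ≠ 0)
    (he1 : e1 ≠ 0)
    (hi1 : e1 + f1 * (l3 / l2 - 1) ≠ 0) :
    ∀ V : Submodule ℂ (Fin 3 → ℂ),
      ((∀ v ∈ V, (!![l1, l1 * l2⁻¹ * l3 + l2, l2; 0, l2, l2; 0, 0, l3]).mulVec v ∈ V) ∧
       (∀ v ∈ V, (!![l3, 0, 0; -l2, l2, 0; l2, -(l1 * l2⁻¹ * l3) - l2, l1]).mulVec v ∈ V) ∧
       (∀ v ∈ V, (!![(c1 * l2 * (l1 - l2) * (l1 - l3) + e1 * l1 * l2 * (l2 + l3)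
                 + f1 * l3 * (l1 - l2) * (l1 + l2)) / (l1 * l2 * (l2 + l3)),
              (l1 * l3 + l2 ^ 2) * (c1 * l2 * (l1 - l3) + f1 * l3 * (l1 + l2))
                 / (l1 * l2 ^ 2 * (l2 + l3)),
              c1;
              0, e1, f1;
              0, 0, e1 + f1 * (l3 / l2 - 1)]).mulVec v ∈ V) ∧
       (∀ v ∈ V, (!![e1 + f1 * (l3 / l2 - 1), 0, 0;
              -f1, e1, 0;
              c1,
              -((l1 * l3 + l2 ^ 2) * (c1 * l2 * (l1 - l3) + f1 * l3 * (l1 + l2))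
                 / (l1 * l2 ^ 2 * (l2 + l3))),
              (c1 * l2 * (l1 - l2) * (l1 - l3) + e1 * l1 * l2 * (l2 + l3)
                 + f1 * l3 * (l1 - l2) * (l1 + l2)) / (l1 * l2 * (l2 + l3))]).mulVec v ∈ V)) →
      V = ⊥ ∨ V = ⊤ := by
  intro V hV
  obtain ⟨hS1, hS2, -, -⟩ := hV
  have hS1v : ∀ u : Fin 3 → ℂ,
      (!![l1, l1 * l2⁻¹ * l3 + l2, l2; 0, l2, l2; 0, 0, l3]).mulVec u
      = ![l1 * u 0 + (l1*l2⁻¹*l3+l2) * u 1 + l2 * u 2, l2 * u 1 + l2 * u 2, l3 * u 2] := by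
    intro u; funext i; fin_cases i <;>
      simp [Matrix.mulVec, dotProduct, Fin.sum_univ_three]
  have hS2v : ∀ u : Fin 3 → ℂ,
      (!![l3, 0, 0; -l2, l2, 0; l2, -(l1 * l2⁻¹ * l3) - l2, l1]).mulVec u
      = ![l3 * u 0, -l2 * u 0 + l2 * u 1,
          l2 * u 0 + (-(l1*l2⁻¹*l3) - l2) * u 1 + l1 * u 2] := by
    intro u; funext i; fin_cases i <;>
      simp [Matrix.mulVec, dotProduct, Fin.sum_univ_three]
  simp only [hS1v] at hS1
  simp only [hS2v] at hS2
  -- basic nonvanishing facts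
  have h23 : l2 + l3 ≠ 0 := fun h => h5 (by linear_combination h)
  have hd1 : l1 ^ 2 + l2 * l3 ≠ 0 := left_ne_zero_of_mul (left_ne_zero_of_mul h4)
  have hd2 : l2 ^ 2 + l1 * l3 ≠ 0 := right_ne_zero_of_mul (left_ne_zero_of_mul h4)
  have hd3 : l3 ^ 2 + l1 * l2 ≠ 0 := right_ne_zero_of_mul h4
  have h123 : l1 * (l2 + l3) ≠ 0 := mul_ne_zero h1 h23
  have hx : l2 * l2⁻¹ = 1 := mul_inv_cancel₀ h2
  -- step: e3 ∈ V → e1 ∈ V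
  have step31 : (![0,0,1] : Fin 3 → ℂ) ∈ V → (![1,0,0] : Fin 3 → ℂ) ∈ V := by
    intro h3v
    have hu : (![l2, l2, 0] : Fin 3 → ℂ) ∈ V := by
      have := V.sub_mem (hS1 _ h3v) (V.smul_mem l3 h3v)
      convert this using 1
      funext i; fin_cases i <;>
        simp <;> (try field_simp) <;> (try ring)
    have hu2 : (![l1 * (l2 + l3), 0, 0] : Fin 3 → ℂ) ∈ V := by
      have := V.sub_mem (hS1 _ hu) (V.smul_mem l2 hu)
      convert this using 1
      funext i; fin_cases i <;>
        simp <;> (try field_simp) <;> (try ring)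
    have := V.smul_mem (l1 * (l2 + l3))⁻¹ hu2
    convert this using 1
    funext i; fin_cases i <;> simp [inv_mul_cancel₀ h123] <;> (try field_simp) <;> (try ring)
  -- step: e1 ∈ V → V = ⊤
  have step1top : (![1,0,0] : Fin 3 → ℂ) ∈ V → V = ⊤ := by
    intro h1v
    have hw : (![0, -l2, l2] : Fin 3 → ℂ) ∈ V := by
      have := V.sub_mem (hS2 _ h1v) (V.smul_mem l3 h1v)
      convert this using 1
      funext i; fin_cases i <;>
        simp <;> (try field_simp) <;> (try ring)
    have hw2 : (![0, 0, l1 * (l2 + l3)] : Fin 3 → ℂ) ∈ V := by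
      have := V.sub_mem (hS2 _ hw) (V.smul_mem l2 hw)
      convert this using 1
      funext i; fin_cases i <;>
        simp <;> (try field_simp) <;> (try ring)
    have h3v : (![0,0,1] : Fin 3 → ℂ) ∈ V := by
      have := V.smul_mem (l1 * (l2 + l3))⁻¹ hw2
      convert this using 1
      funext i; fin_cases i <;> simp [inv_mul_cancel₀ h123] <;> (try field_simp) <;> (try ring)
    have h2v : (![0,1,0] : Fin 3 → ℂ) ∈ V := by
      have := V.sub_mem h3v (V.smul_mem l2⁻¹ hw)
      convert this using 1
      funext i; fin_cases i <;> simp <;> (try field_simp) <;> (try ring)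
    refine eq_top_iff.mpr ?_
    intro u _
    have hu : u = u 0 • (![1,0,0] : Fin 3 → ℂ) + u 1 • ![0,1,0] + u 2 • ![0,0,1] := by
      funext i; fin_cases i <;> simp
    rw [hu]
    exact V.add_mem (V.add_mem (V.smul_mem _ h1v) (V.smul_mem _ h2v)) (V.smul_mem _ h3v)
  -- the rank-one operators : for w ∈ V, (m·w)e₁ ∈ V and (n·w)e₃ ∈ V
  have hM : ∀ w ∈ V,
      (![(l1-l2)*(l1-l3) * w 0 + (l1*l2⁻¹*l3+l2)*(l1-l3) * w 1 + l1*(l2+l3) * w 2, 0, 0]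
        : Fin 3 → ℂ) ∈ V := by
    intro w hw
    have := V.add_mem (V.sub_mem (hS1 _ (hS1 _ hw)) (V.smul_mem (l2+l3) (hS1 _ hw)))
      (V.smul_mem (l2*l3) hw)
    convert this using 1
    funext i; fin_cases i <;>
      (simp only [Matrix.cons_val_zero, Matrix.cons_val_one, Matrix.head_cons,
        Matrix.cons_val_two, Matrix.tail_cons, Pi.add_apply, Pi.sub_apply, Pi.smul_apply,
        smul_eq_mul, Fin.reduceFinMk, Fin.isValue]) <;> (try field_simp) <;> (try ring)
  have hN : ∀ w ∈ V,
      (![0, 0, l1*(l2+l3) * w 0 - (l1*l2⁻¹*l3+l2)*(l1-l3) * w 1 + (l1-l2)*(l1-l3) * w 2]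
        : Fin 3 → ℂ) ∈ V := by
    intro w hw
    have := V.add_mem (V.sub_mem (hS2 _ (hS2 _ hw)) (V.smul_mem (l2+l3) (hS2 _ hw)))
      (V.smul_mem (l2*l3) hw)
    convert this using 1
    funext i; fin_cases i <;>
      (simp only [Matrix.cons_val_zero, Matrix.cons_val_one, Matrix.head_cons,
        Matrix.cons_val_two, Matrix.tail_cons, Pi.add_apply, Pi.sub_apply, Pi.smul_apply,
        smul_eq_mul, Fin.reduceFinMk, Fin.isValue]) <;> (try field_simp) <;> (try ring)
  by_cases hm : ∀ w ∈ V, (l1-l2)*(l1-l3) * w 0 + (l1*l2⁻¹*l3+l2)*(l1-l3) * w 1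
      + l1*(l2+l3) * w 2 = 0
  · by_cases hn : ∀ w ∈ V, l1*(l2+l3) * w 0 - (l1*l2⁻¹*l3+l2)*(l1-l3) * w 1
        + (l1-l2)*(l1-l3) * w 2 = 0
    · -- every member is zero : V = ⊥
      left
      rw [Submodule.eq_bot_iff]
      intro v hv
      have hsum : ∀ w ∈ V, w 0 + w 2 = 0 := by
        intro w hw
        have h := hm w hw
        have h' := hn w hw
        have key : (l1 ^ 2 + l2 * l3) * (w 0 + w 2) = 0 := by linear_combination h + h'
        exact (mul_eq_zero.mp key).resolve_left hd1
      have eA := hsum v hv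
      have eB := hsum _ (hS1 _ hv)
      have eC := hsum _ (hS1 _ (hS1 _ hv))
      simp only [Matrix.cons_val_zero, Matrix.cons_val_one, Matrix.head_cons,
        Matrix.cons_val_two, Matrix.tail_cons, Fin.reduceFinMk, Fin.isValue] at eB eC
      have hc : v 2 = 0 := by
        have key : l2 * ((l3 ^ 2 + l1 * l2) * v 2) = 0 := by
          field_simp at eB eC
          linear_combination (-(l1 + l2)) * eB + eC + l1 * l2 ^ 2 * eA
        exact (mul_eq_zero.mp ((mul_eq_zero.mp key).resolve_left h2)).resolve_left hd3
      have hb : v 1 = 0 := by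
        have key : (l2 ^ 2 + l1 * l3) * v 1 = 0 := by
          field_simp at eB
          linear_combination eB - l1 * l2 * eA + (l1 * l2 - l2 ^ 2 - l2 * l3) * hc
        exact (mul_eq_zero.mp key).resolve_left hd2
      have ha : v 0 = 0 := by linear_combination eA - hc
      funext i; fin_cases i <;> simp [ha, hb, hc]
    · -- some w with n·w ≠ 0 : e3 ∈ V
      right
      push_neg at hn
      obtain ⟨w, hw, hwn⟩ := hn
      have h3v : (![0,0,1] : Fin 3 → ℂ) ∈ V := by
        have := V.smul_mem (l1*(l2+l3) * w 0 - (l1*l2⁻¹*l3+l2)*(l1-l3) * w 1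
          + (l1-l2)*(l1-l3) * w 2)⁻¹ (hN w hw)
        convert this using 1
        funext i; fin_cases i <;> simp [inv_mul_cancel₀ hwn]
      exact step1top (step31 h3v)
  · -- some w with m·w ≠ 0 : e1 ∈ V
    right
    push_neg at hm
    obtain ⟨w, hw, hwm⟩ := hm
    have h1v : (![1,0,0] : Fin 3 → ℂ) ∈ V := by
      have := V.smul_mem ((l1-l2)*(l1-l3) * w 0 + (l1*l2⁻¹*l3+l2)*(l1-l3) * w 1
        + l1*(l2+l3) * w 2)⁻¹ (hM w hw)
      convert this using 1
      funext i; fin_cases i <;> simp [inv_mul_cancel₀ hwm]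
    exact step1top h1v
end

section
/- Let n ≥ 3 and a, c, t ∈ ℂ with c ≠ 0 and a ≠ 1. For 1 ≤ i ≤ n−1 let A_i = L_i([[a, (1−a)/c],[c, 0]]) and B_i = L_i([[1 − (1−a)(1−t), (1−a)(1−t)/c],[c(1−t), t]]) be n×n complex matrices. Then the vector v ∈ ℂⁿ with entries v_j = c^j (1 ≤ j ≤ n) satisfies A_i v = v and B_i v = v for all 1 ≤ i ≤ n−1; consequently the one-dimensional subspace spanned by v is a nontrivial proper subspace of ℂⁿ invariant under all A_i and B_i, so the family {A_i, B_i : 1 ≤ i ≤ n−1} is reducible. -/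
/-!
Each of the two `2 × 2` blocks fixes `(1, c)`, and any two consecutive entries
`(c ^ (k + 1), c ^ (k + 2))` of `v` are a multiple of `(1, c)`; hence every `A_i` and `B_i`
fixes `v`. So the line spanned by `v ≠ 0` is invariant, and it is proper because `n ≥ 2`.
-/

open Matrix

/-- `localBlock n k M` is the `n × n` matrix agreeing with the identity matrix except that
its `2 × 2` block in (0-based) rows and columns `k, k + 1` equals `M`.  For `1 ≤ i ≤ n - 1`
(1-based indexing), the matrix `L_i(M)` of the paper is `localBlock n (i - 1) M`. -/
def localBlock (n k : ℕ) (M : Matrix (Fin 2) (Fin 2) ℂ) : Matrix (Fin n) (Fin n) ℂ :=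
  fun j l =>
    if j.val = k ∧ l.val = k then M 0 0
    else if j.val = k ∧ l.val = k + 1 then M 0 1
    else if j.val = k + 1 ∧ l.val = k then M 1 0
    else if j.val = k + 1 ∧ l.val = k + 1 then M 1 1
    else if j = l then 1 else 0

theorem localBlock_mulVec_eq_self {n k : ℕ} (hk : k + 1 < n) {M : Matrix (Fin 2) (Fin 2) ℂ}
    {v : Fin n → ℂ}
    (hM : M *ᵥ ![v ⟨k, by omega⟩, v ⟨k + 1, hk⟩] = ![v ⟨k, by omega⟩, v ⟨k + 1, hk⟩]) :
    localBlock n k M *ᵥ v = v := by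
  have h0 := congrFun hM 0
  have h1 := congrFun hM 1
  simp only [mulVec, dotProduct, Fin.sum_univ_two] at h0 h1
  funext j
  by_cases hj : j.val = k ∨ j.val = k + 1
  · rw [mulVec, dotProduct,
      Fintype.sum_eq_add ⟨k, by omega⟩ ⟨k + 1, hk⟩ (by simp [Fin.ext_iff]) fun l hl => ?_]
    · rcases hj with hj | hj <;> simp [localBlock, hj] at h0 h1 ⊢ <;> grind
    · simp only [ne_eq, Fin.ext_iff] at hl
      simp [localBlock, hl]
      grind
  · push Not at hj
    rw [mulVec, dotProduct, Fintype.sum_eq_single j fun l hl => ?_]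
    · simp [localBlock, hj]
    · simp [localBlock, hj, Ne.symm hl]

theorem localBlock_mulVec_geometric {n k : ℕ} (hk : k + 1 < n) {M : Matrix (Fin 2) (Fin 2) ℂ}
    {c : ℂ} (hM : M *ᵥ ![1, c] = ![1, c]) :
    localBlock n k M *ᵥ (fun j : Fin n => c ^ (j.val + 1)) = fun j => c ^ (j.val + 1) := by
  refine localBlock_mulVec_eq_self hk ?_
  have hblock : ![c ^ (k + 1), c ^ (k + 1 + 1)] = c ^ (k + 1) • ![1, c] := by
    ext i; fin_cases i <;> simp [pow_succ]
  simp only [hblock, mulVec_smul, hM]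

theorem sigma_mulVec_one_c {a c : ℂ} (hc : c ≠ 0) :
    !![a, (1 - a) / c; c, 0] *ᵥ ![1, c] = ![1, c] := by
  ext i; fin_cases i <;> simp [mul_div_cancel₀ _ hc]

theorem tau_mulVec_one_c {a c t : ℂ} (hc : c ≠ 0) :
    !![1 - (1 - a) * (1 - t), (1 - a) * (1 - t) / c; c * (1 - t), t] *ᵥ ![1, c] = ![1, c] := by
  ext i
  fin_cases i
  · simp [mul_div_cancel₀ _ hc]
  · simp; ring

theorem Matrix.mulVec_mem_span_singleton {R ι : Type*} [CommRing R] [Fintype ι]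
    {A : Matrix ι ι R} {v u : ι → R} (hA : A *ᵥ v = v) (hu : u ∈ Submodule.span R {v}) :
    A *ᵥ u ∈ Submodule.span R {v} := by
  obtain ⟨r, rfl⟩ := Submodule.mem_span_singleton.1 hu
  rw [mulVec_smul, hA]
  exact Submodule.smul_mem _ r (Submodule.mem_span_singleton_self v)

theorem Submodule.span_singleton_ne_top_of_one_lt_finrank {K V : Type*} [DivisionRing K]
    [AddCommGroup V] [Module K V] (h : 1 < Module.finrank K V) (v : V) :
    Submodule.span K {v} ≠ ⊤ := by
  intro htop
  have hle := finrank_span_le_card (R := K) ({v} : Set V)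
  rw [htop, finrank_top, Set.toFinset_singleton, Finset.card_singleton] at hle
  omega

theorem rho1_local_reducible_general (n : ℕ) (hn : 3 ≤ n) (a c t : ℂ)
    (hc : c ≠ 0)
    (A B : ℕ → Matrix (Fin n) (Fin n) ℂ)
    (hA : ∀ i, A i = localBlock n (i - 1) !![a, (1 - a) / c; c, 0])
    (hB : ∀ i, B i = localBlock n (i - 1)
        !![1 - (1 - a) * (1 - t), (1 - a) * (1 - t) / c; c * (1 - t), t])
    (v : Fin n → ℂ) (hv : ∀ j : Fin n, v j = c ^ (j.val + 1)) :
    (∀ i : ℕ, 1 ≤ i → i ≤ n - 1 → (A i).mulVec v = v ∧ (B i).mulVec v = v) ∧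
    Submodule.span ℂ {v} ≠ ⊥ ∧ Submodule.span ℂ {v} ≠ ⊤ ∧
    (∀ i : ℕ, 1 ≤ i → i ≤ n - 1 → ∀ u ∈ Submodule.span ℂ {v},
        (A i).mulVec u ∈ Submodule.span ℂ {v} ∧ (B i).mulVec u ∈ Submodule.span ℂ {v}) := by
  obtain rfl : v = fun j => c ^ (j.val + 1) := funext hv
  have hfix : ∀ i, 1 ≤ i → i ≤ n - 1 →
      A i *ᵥ (fun j => c ^ (j.val + 1)) = (fun j => c ^ (j.val + 1)) ∧
      B i *ᵥ (fun j => c ^ (j.val + 1)) = (fun j => c ^ (j.val + 1)) := fun i hi1 hi2 =>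
    ⟨hA i ▸ localBlock_mulVec_geometric (by omega) (sigma_mulVec_one_c hc),
      hB i ▸ localBlock_mulVec_geometric (by omega) (tau_mulVec_one_c hc)⟩
  have hv0 : (fun j : Fin n => c ^ (j.val + 1)) ≠ 0 := fun h =>
    hc (by simpa using congrFun h ⟨0, by omega⟩)
  refine ⟨hfix, Submodule.span_singleton_eq_bot.not.2 hv0,
    Submodule.span_singleton_ne_top_of_one_lt_finrank (by simp; omega) _,
    fun i hi1 hi2 u hu => ⟨?_, ?_⟩⟩
  · exact mulVec_mem_span_singleton (hfix i hi1 hi2).1 hu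
  · exact mulVec_mem_span_singleton (hfix i hi1 hi2).2 hu

/-- Theorem 5.5 for `ρ₁`: the homogeneous local representation `ρ₁` of `SBₙ` is reducible;
the vector with entries `v_j = c^j` is fixed by all `ρ₁(σ_i)` and `ρ₁(τ_i)`, and spans a
nontrivial proper invariant subspace. -/
theorem rho1_local_reducible (n : ℕ) (hn : 3 ≤ n) (a c t : ℂ)
    (hc : c ≠ 0) (ha : a ≠ 1)
    (A B : ℕ → Matrix (Fin n) (Fin n) ℂ)
    (hA : ∀ i, A i = localBlock n (i - 1) !![a, (1 - a) / c; c, 0])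
    (hB : ∀ i, B i = localBlock n (i - 1)
        !![1 - (1 - a) * (1 - t), (1 - a) * (1 - t) / c; c * (1 - t), t])
    (v : Fin n → ℂ) (hv : ∀ j : Fin n, v j = c ^ (j.val + 1)) :
    (∀ i : ℕ, 1 ≤ i → i ≤ n - 1 → (A i).mulVec v = v ∧ (B i).mulVec v = v) ∧
    Submodule.span ℂ {v} ≠ ⊥ ∧ Submodule.span ℂ {v} ≠ ⊤ ∧
    (∀ i : ℕ, 1 ≤ i → i ≤ n - 1 → ∀ u ∈ Submodule.span ℂ {v},
        (A i).mulVec u ∈ Submodule.span ℂ {v} ∧ (B i).mulVec u ∈ Submodule.span ℂ {v}) :=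
  rho1_local_reducible_general n hn a c t hc A B hA hB v hv
end

section
/- Let n ≥ 3 and c, d, x ∈ ℂ with c ≠ 0 and d ≠ 1. For 1 ≤ i ≤ n−1 let A_i = L_i([[0, (1−d)/c],[c, d]]) and B_i = L_i([[x, (1−d)(1−x)/c],[c(1−x), 1 − (1−d)(1−x)]]) be n×n complex matrices. Then the vector v ∈ ℂⁿ with entries v_j = ((1−d)/c)^{n−j} (1 ≤ j ≤ n) is nonzero and satisfies A_i v = v and B_i v = v for all 1 ≤ i ≤ n−1; consequently the one-dimensional subspace spanned by v is a nontrivial proper subspace of ℂⁿ invariant under all A_i and B_i, so the family {A_i, B_i : 1 ≤ i ≤ n−1} is reducible. -/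
open Matrix

lemma mulVec_localBlock (n k : ℕ) (hk : k + 1 < n) (M : Matrix (Fin 2) (Fin 2) ℂ)
    (v : Fin n → ℂ) (j : Fin n) :
    (localBlock n k M).mulVec v j =
      if j.val = k then
        M 0 0 * v ⟨k, Nat.lt_of_succ_lt hk⟩ + M 0 1 * v ⟨k + 1, hk⟩
      else if j.val = k + 1 then
        M 1 0 * v ⟨k, Nat.lt_of_succ_lt hk⟩ + M 1 1 * v ⟨k + 1, hk⟩
      else v j := by
  have hk0 : k < n := Nat.lt_of_succ_lt hk
  simp only [mulVec, dotProduct]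
  by_cases h0 : j.val = k
  · rw [if_pos h0]
    have key : ∀ l : Fin n, localBlock n k M j l * v l =
        (if l = ⟨k, hk0⟩ then M 0 0 * v l else 0) +
        (if l = ⟨k + 1, hk⟩ then M 0 1 * v l else 0) := by
      intro l
      rcases eq_or_ne l ⟨k, hk0⟩ with rfl | h1
      · simp [localBlock, h0, Fin.ext_iff]
      · rcases eq_or_ne l ⟨k + 1, hk⟩ with rfl | h2
        · simp [localBlock, h0, Fin.ext_iff]
        · have h1' : l.val ≠ k := fun h => h1 (Fin.ext h)
          have h2' : l.val ≠ k + 1 := fun h => h2 (Fin.ext h)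
          have hjl : j ≠ l := fun h => h1' (h ▸ h0)
          simp [localBlock, h0, h1, h2, h1', h2', hjl]
    simp [key, Finset.sum_add_distrib]
  · rw [if_neg h0]
    by_cases h1 : j.val = k + 1
    · rw [if_pos h1]
      have key : ∀ l : Fin n, localBlock n k M j l * v l =
          (if l = ⟨k, hk0⟩ then M 1 0 * v l else 0) +
          (if l = ⟨k + 1, hk⟩ then M 1 1 * v l else 0) := by
        intro l
        rcases eq_or_ne l ⟨k, hk0⟩ with rfl | h1'
        · simp [localBlock, h0, h1, Fin.ext_iff]
        · rcases eq_or_ne l ⟨k + 1, hk⟩ with rfl | h2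
          · simp [localBlock, h0, h1, Fin.ext_iff]
          · have hl1 : l.val ≠ k := fun h => h1' (Fin.ext h)
            have hl2 : l.val ≠ k + 1 := fun h => h2 (Fin.ext h)
            have hjl : j ≠ l := fun h => hl2 (h ▸ h1)
            simp [localBlock, h0, h1, h1', h2, hl1, hl2, hjl]
      simp [key, Finset.sum_add_distrib]
    · rw [if_neg h1]
      have key : ∀ l : Fin n, localBlock n k M j l * v l =
          if j = l then v l else 0 := by
        intro l
        simp [localBlock, h0, h1]
      simp [key]

/-- Theorem 5.5 for `ρ₂`: the homogeneous local representation `ρ₂` of `SBₙ` is reducible;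
the nonzero vector with entries `v_j = ((1 - d)/c)^(n - j)` is fixed by all `ρ₂(σ_i)` and
`ρ₂(τ_i)`, and spans a nontrivial proper invariant subspace. -/
theorem rho2_local_reducible (n : ℕ) (hn : 3 ≤ n) (c d x : ℂ)
    (hc : c ≠ 0) (hd : d ≠ 1)
    (A B : ℕ → Matrix (Fin n) (Fin n) ℂ)
    (hA : ∀ i, A i = localBlock n (i - 1) !![0, (1 - d) / c; c, d])
    (hB : ∀ i, B i = localBlock n (i - 1)
        !![x, (1 - d) * (1 - x) / c; c * (1 - x), 1 - (1 - d) * (1 - x)])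
    (v : Fin n → ℂ) (hv : ∀ j : Fin n, v j = ((1 - d) / c) ^ (n - (j.val + 1))) :
    v ≠ 0 ∧
    (∀ i : ℕ, 1 ≤ i → i ≤ n - 1 → (A i).mulVec v = v ∧ (B i).mulVec v = v) ∧
    Submodule.span ℂ {v} ≠ ⊥ ∧ Submodule.span ℂ {v} ≠ ⊤ ∧
    (∀ i : ℕ, 1 ≤ i → i ≤ n - 1 → ∀ u ∈ Submodule.span ℂ {v},
        (A i).mulVec u ∈ Submodule.span ℂ {v} ∧ (B i).mulVec u ∈ Submodule.span ℂ {v}) := by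
  have hd' : (1 : ℂ) - d ≠ 0 := sub_ne_zero.mpr (Ne.symm hd)
  have hv0 : v ≠ 0 := by
    intro h
    have h1 := congrFun h ⟨n - 1, by omega⟩
    rw [hv] at h1
    have h2 : n - (n - 1 + 1) = 0 := by omega
    rw [h2, pow_zero] at h1
    exact one_ne_zero h1
  -- the fixed-vector property
  have hfix : ∀ i : ℕ, 1 ≤ i → i ≤ n - 1 →
      (A i).mulVec v = v ∧ (B i).mulVec v = v := by
    intro i hi1 hi2
    set k := i - 1 with hkdef
    have hk : k + 1 < n := by omega
    have hk0 : k < n := Nat.lt_of_succ_lt hk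
    have hvk : v ⟨k, hk0⟩ = ((1 - d) / c) ^ (n - (k + 1)) := hv _
    have hvk1 : v ⟨k + 1, hk⟩ = ((1 - d) / c) ^ (n - (k + 2)) := hv _
    have hpow : ((1 - d) / c) ^ (n - (k + 1)) =
        ((1 - d) / c) ^ (n - (k + 2)) * ((1 - d) / c) := by
      rw [← pow_succ]
      congr 1
      omega
    constructor
    · funext j
      rw [hA, mulVec_localBlock n k hk _ v j]
      by_cases h0 : j.val = k
      · rw [if_pos h0, hv j, h0, hvk, hvk1, hpow]
        simp only [Matrix.cons_val', Matrix.cons_val_zero, Matrix.cons_val_one,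
          Matrix.head_cons, Matrix.empty_val', Matrix.cons_val_fin_one, Matrix.head_fin_const,
          Matrix.of_apply]
        ring
      · by_cases h1 : j.val = k + 1
        · rw [if_neg h0, if_pos h1, hv j, h1, hvk, hvk1, hpow]
          simp only [Matrix.cons_val', Matrix.cons_val_zero, Matrix.cons_val_one,
            Matrix.head_cons, Matrix.empty_val', Matrix.cons_val_fin_one, Matrix.head_fin_const,
            Matrix.of_apply]
          show c * (((1 - d) / c) ^ (n - (k + 2)) * ((1 - d) / c)) +
              d * ((1 - d) / c) ^ (n - (k + 2)) = ((1 - d) / c) ^ (n - (k + 2))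
          field_simp
          ring
        · rw [if_neg h0, if_neg h1]
    · funext j
      rw [hB, mulVec_localBlock n k hk _ v j]
      by_cases h0 : j.val = k
      · rw [if_pos h0, hv j, h0, hvk, hvk1, hpow]
        simp only [Matrix.cons_val', Matrix.cons_val_zero, Matrix.cons_val_one,
          Matrix.head_cons, Matrix.empty_val', Matrix.cons_val_fin_one, Matrix.head_fin_const,
          Matrix.of_apply]
        show x * (((1 - d) / c) ^ (n - (k + 2)) * ((1 - d) / c)) +
            (1 - d) * (1 - x) / c * ((1 - d) / c) ^ (n - (k + 2)) =
            ((1 - d) / c) ^ (n - (k + 2)) * ((1 - d) / c)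
        field_simp
        ring
      · by_cases h1 : j.val = k + 1
        · rw [if_neg h0, if_pos h1, hv j, h1, hvk, hvk1, hpow]
          simp only [Matrix.cons_val', Matrix.cons_val_zero, Matrix.cons_val_one,
            Matrix.head_cons, Matrix.empty_val', Matrix.cons_val_fin_one, Matrix.head_fin_const,
            Matrix.of_apply]
          show c * (1 - x) * (((1 - d) / c) ^ (n - (k + 2)) * ((1 - d) / c)) +
              (1 - (1 - d) * (1 - x)) * ((1 - d) / c) ^ (n - (k + 2)) =
              ((1 - d) / c) ^ (n - (k + 2))
          field_simp
          ring
        · rw [if_neg h0, if_neg h1]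
  refine ⟨hv0, hfix, ?_, ?_, ?_⟩
  · simpa [Submodule.span_singleton_eq_bot] using hv0
  · intro h
    have h1 : Module.finrank ℂ (Submodule.span ℂ {v}) = 1 := finrank_span_singleton hv0
    rw [h] at h1
    rw [finrank_top, Module.finrank_pi] at h1
    simp [Fintype.card_fin] at h1
    omega
  · intro i hi1 hi2 u hu
    obtain ⟨a, rfl⟩ := Submodule.mem_span_singleton.mp hu
    rw [mulVec_smul, mulVec_smul, (hfix i hi1 hi2).1, (hfix i hi1 hi2).2]
    exact ⟨Submodule.smul_mem _ _ (Submodule.mem_span_singleton_self v),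
      Submodule.smul_mem _ _ (Submodule.mem_span_singleton_self v)⟩
end

section
/- Let n ≥ 3 and b, c, x, y ∈ ℂ with b ≠ 0, c ≠ 0, bc ≠ 1, and x² ≠ cy²/b. For 1 ≤ i ≤ n−1 let A_i = L_i([[0, b],[c, 0]]) and B_i = L_i([[x, y],[cy/b, x]]) be n×n complex matrices. Then the only subspaces V of ℂⁿ with A_i V ⊆ V and B_i V ⊆ V for all 1 ≤ i ≤ n−1 are V = 0 and V = ℂⁿ; i.e., the family {A_i, B_i : 1 ≤ i ≤ n−1} is irreducible. -/
/-!
Write `A_k` for the block `[[0, b], [c, 0]]` in rows `k, k + 1`. Then `A_k² = 1 + (bc - 1) P_k`,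
where `P_k` is the coordinate projection onto `{e_k, e_{k+1}}`, so for `bc ≠ 1` an `A`-invariant
subspace `V` is `P_k`-invariant. Products and differences of the `P_k` give every
single-coordinate projection once `n ≥ 3` (`P_{k-1} P_k` in the interior, `P_0 - P_0 P_1` and its
mirror at the ends), so a nonzero `V` contains some `e_j`. Finally `A_k e_k = c e_{k+1}` and
`A_k e_{k+1} = b e_k` with `b, c ≠ 0`, so `V` contains every `e_j`.
-/

open Matrix

section SingleCoordinates

variable {ι K : Type*} [Field K] [DecidableEq ι] {V : Submodule K (ι → K)}

theorem Submodule.single_mem_iff_single_one_mem {j : ι} {a : K} (ha : a ≠ 0) :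
    Pi.single j a ∈ V ↔ Pi.single j 1 ∈ V := by
  rw [← V.smul_mem_iff ha (x := Pi.single j 1), ← Pi.single_smul', smul_eq_mul, mul_one]

theorem Submodule.exists_single_one_mem (hV : ∀ j, ∀ u ∈ V, Pi.single j (u j) ∈ V)
    (hV0 : V ≠ ⊥) : ∃ j, Pi.single j (1 : K) ∈ V := by
  obtain ⟨u, hu, hu0⟩ := V.ne_bot_iff.mp hV0
  obtain ⟨j, hj⟩ := Function.ne_iff.mp hu0
  exact ⟨j, (V.single_mem_iff_single_one_mem hj).mp (hV j u hu)⟩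

theorem Submodule.eq_top_of_forall_single_one_mem [Finite ι]
    (hV : ∀ j, Pi.single j (1 : K) ∈ V) : V = ⊤ := by
  have := Fintype.ofFinite ι
  rw [eq_top_iff, ← (Pi.basisFun K ι).span_eq, Submodule.span_le]
  rintro _ ⟨j, rfl⟩
  simpa using hV j

end SingleCoordinates

theorem Fin.iff_of_forall_iff_succ {n : ℕ} {P : Fin n → Prop}
    (h : ∀ k (hk : k + 1 < n), P ⟨k, by omega⟩ ↔ P ⟨k + 1, hk⟩) (i j : Fin n) : P i ↔ P j := by
  suffices key : ∀ m (hm : m < n), P ⟨m, hm⟩ ↔ P ⟨0, by omega⟩ from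
    (key i i.2).trans (key j j.2).symm
  intro m hm
  induction m with
  | zero => rfl
  | succ m ih => exact (h m hm).symm.trans (ih (by omega))

section LocalBlock

variable {n k : ℕ} (hk : k + 1 < n)

theorem localBlock_mulVec_apply (M : Matrix (Fin 2) (Fin 2) ℂ) (u : Fin n → ℂ) (j : Fin n) :
    (localBlock n k M *ᵥ u) j =
      if j.val = k then M 0 0 * u ⟨k, by omega⟩ + M 0 1 * u ⟨k + 1, hk⟩
      else if j.val = k + 1 then M 1 0 * u ⟨k, by omega⟩ + M 1 1 * u ⟨k + 1, hk⟩
      else u j := by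
  have hne : (⟨k, by omega⟩ : Fin n) ≠ ⟨k + 1, hk⟩ := by simp [Fin.ext_iff]
  simp only [mulVec, dotProduct]
  split_ifs with h0 h1
  · rw [Fintype.sum_eq_add _ _ hne] <;> grind [localBlock]
  · rw [Fintype.sum_eq_add _ _ hne] <;> grind [localBlock]
  · rw [Fintype.sum_eq_single j] <;> grind [localBlock]

theorem localBlock_mulVec_single_left (b c : ℂ) :
    localBlock n k !![0, b; c, 0] *ᵥ Pi.single ⟨k, by omega⟩ 1 = Pi.single ⟨k + 1, hk⟩ c := by
  ext j
  rw [localBlock_mulVec_apply hk]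
  simp [Pi.single_apply, Fin.ext_iff]
  grind

theorem localBlock_mulVec_single_right (b c : ℂ) :
    localBlock n k !![0, b; c, 0] *ᵥ Pi.single ⟨k + 1, hk⟩ 1 = Pi.single ⟨k, by omega⟩ b := by
  ext j
  rw [localBlock_mulVec_apply hk]
  simp [Pi.single_apply, Fin.ext_iff]
  grind

theorem localBlock_mulVec_mulVec (b c : ℂ) (u : Fin n → ℂ) :
    localBlock n k !![0, b; c, 0] *ᵥ (localBlock n k !![0, b; c, 0] *ᵥ u) =
      u + (b * c - 1) • ({⟨k, by omega⟩, ⟨k + 1, hk⟩} : Set (Fin n)).indicator u := by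
  ext j
  by_cases h0 : j = ⟨k, by omega⟩
  · subst h0
    simp [localBlock_mulVec_apply hk]
    ring
  by_cases h1 : j = ⟨k + 1, hk⟩
  · subst h1
    simp [localBlock_mulVec_apply hk]
    ring
  have h0' : j.val ≠ k := fun h => h0 (Fin.ext h)
  have h1' : j.val ≠ k + 1 := fun h => h1 (Fin.ext h)
  simp [localBlock_mulVec_apply hk, h0, h1, h0', h1']

end LocalBlock

def IsAntidiagInvariant (n : ℕ) (b c : ℂ) (V : Submodule ℂ (Fin n → ℂ)) : Prop :=
  ∀ k, k + 1 < n → ∀ u ∈ V, localBlock n k !![0, b; c, 0] *ᵥ u ∈ V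

namespace IsAntidiagInvariant

variable {n : ℕ} {b c : ℂ} {V : Submodule ℂ (Fin n → ℂ)}

theorem indicator_pair_mem (hV : IsAntidiagInvariant n b c V) (hbc : b * c ≠ 1) {k : ℕ}
    (hk : k + 1 < n) {u : Fin n → ℂ} (hu : u ∈ V) :
    ({⟨k, by omega⟩, ⟨k + 1, hk⟩} : Set (Fin n)).indicator u ∈ V := by
  have hmem := V.sub_mem (hV k hk _ (hV k hk u hu)) hu
  rwa [localBlock_mulVec_mulVec hk, add_sub_cancel_left,
    V.smul_mem_iff (sub_ne_zero.mpr hbc)] at hmem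

theorem indicator_singleton_mem (hV : IsAntidiagInvariant n b c V) (hbc : b * c ≠ 1) {j : ℕ}
    (hj0 : 0 < j) (hjn : j + 1 < n) {u : Fin n → ℂ} (hu : u ∈ V) :
    ({⟨j, by omega⟩} : Set (Fin n)).indicator u ∈ V := by
  have hset : ({⟨j, by omega⟩} : Set (Fin n)) =
      {⟨j - 1, by omega⟩, ⟨j - 1 + 1, by omega⟩} ∩ {⟨j, by omega⟩, ⟨j + 1, hjn⟩} := by
    ext l
    simp only [Set.mem_singleton_iff, Set.mem_insert_iff, Set.mem_inter_iff, Fin.ext_iff]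
    omega
  rw [hset, ← Set.indicator_indicator]
  exact hV.indicator_pair_mem hbc _ (hV.indicator_pair_mem hbc hjn hu)

theorem single_apply_mem (hV : IsAntidiagInvariant n b c V) (hn : 3 ≤ n) (hbc : b * c ≠ 1)
    (j : Fin n) {u : Fin n → ℂ} (hu : u ∈ V) : Pi.single j (u j) ∈ V := by
  rw [← Set.indicator_singleton]
  obtain ⟨j, hj⟩ := j
  rcases Nat.eq_zero_or_pos j with rfl | hj0
  · have hset : ({⟨0, hj⟩} : Set (Fin n)) = {⟨0, hj⟩, ⟨0 + 1, by omega⟩} \ {⟨1, by omega⟩} := by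
      ext l
      simp only [Set.mem_singleton_iff, Set.mem_insert_iff, Set.mem_sdiff, Fin.ext_iff]
      omega
    rw [hset, Set.indicator_sdiff (by simp)]
    exact V.sub_mem (hV.indicator_pair_mem hbc _ hu)
      (hV.indicator_singleton_mem hbc one_pos (by omega) hu)
  rcases (Nat.succ_le_of_lt hj).lt_or_eq with hjn | hjn
  · exact hV.indicator_singleton_mem hbc hj0 hjn hu
  · have hset : ({⟨j, hj⟩} : Set (Fin n)) =
        {⟨j - 1, by omega⟩, ⟨j - 1 + 1, by omega⟩} \ {⟨j - 1, by omega⟩} := by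
      ext l
      simp only [Set.mem_singleton_iff, Set.mem_insert_iff, Set.mem_sdiff, Fin.ext_iff]
      omega
    rw [hset, Set.indicator_sdiff (by simp)]
    exact V.sub_mem (hV.indicator_pair_mem hbc _ hu)
      (hV.indicator_singleton_mem hbc (j := j - 1) (by omega) (by omega) hu)

theorem single_one_mem_iff_succ (hV : IsAntidiagInvariant n b c V) (hb : b ≠ 0) (hc : c ≠ 0)
    {k : ℕ} (hk : k + 1 < n) :
    Pi.single ⟨k, by omega⟩ 1 ∈ V ↔ Pi.single ⟨k + 1, hk⟩ 1 ∈ V := by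
  refine ⟨fun h => ?_, fun h => ?_⟩
  · rw [← V.single_mem_iff_single_one_mem hc, ← localBlock_mulVec_single_left hk b]
    exact hV k hk _ h
  · rw [← V.single_mem_iff_single_one_mem hb, ← localBlock_mulVec_single_right hk b c]
    exact hV k hk _ h

end IsAntidiagInvariant

theorem rho3_local_irreducible_of_bc_ne_one_general (n : ℕ) (hn : 3 ≤ n) (b c : ℂ)
    (hb : b ≠ 0) (hc : c ≠ 0) (hbc : b * c ≠ 1)
    (A B : ℕ → Matrix (Fin n) (Fin n) ℂ)
    (hA : ∀ i, A i = localBlock n (i - 1) !![0, b; c, 0]) :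
    ∀ V : Submodule ℂ (Fin n → ℂ),
      (∀ i : ℕ, 1 ≤ i → i ≤ n - 1 → ∀ u ∈ V, (A i).mulVec u ∈ V ∧ (B i).mulVec u ∈ V) →
      V = ⊥ ∨ V = ⊤ := by
  intro V hV
  have hAV : IsAntidiagInvariant n b c V := by
    intro k hk u hu
    simpa [hA] using (hV (k + 1) (by omega) (by omega) u hu).1
  refine or_iff_not_imp_left.mpr fun hV0 => ?_
  obtain ⟨j₀, hj₀⟩ := V.exists_single_one_mem (fun j u => hAV.single_apply_mem hn hbc j) hV0
  refine V.eq_top_of_forall_single_one_mem fun j => ?_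
  exact (Fin.iff_of_forall_iff_succ (P := fun j => Pi.single j 1 ∈ V)
    (fun k hk => hAV.single_one_mem_iff_succ hb hc hk) j j₀).mpr hj₀

/-- Theorem 5.6, first part: the homogeneous local representation `ρ₃` of `SBₙ`
is irreducible when `bc ≠ 1`. -/
theorem rho3_local_irreducible_of_bc_ne_one (n : ℕ) (hn : 3 ≤ n) (b c x y : ℂ)
    (hb : b ≠ 0) (hc : c ≠ 0) (hbc : b * c ≠ 1) (hxy : x ^ 2 ≠ c * y ^ 2 / b)
    (A B : ℕ → Matrix (Fin n) (Fin n) ℂ)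
    (hA : ∀ i, A i = localBlock n (i - 1) !![0, b; c, 0])
    (hB : ∀ i, B i = localBlock n (i - 1) !![x, y; c * y / b, x]) :
    ∀ V : Submodule ℂ (Fin n → ℂ),
      (∀ i : ℕ, 1 ≤ i → i ≤ n - 1 → ∀ u ∈ V, (A i).mulVec u ∈ V ∧ (B i).mulVec u ∈ V) →
      V = ⊥ ∨ V = ⊤ :=
  rho3_local_irreducible_of_bc_ne_one_general n hn b c hb hc hbc A B hA
end

section
/- Let n ≥ 3 and b, c, x, y ∈ ℂ with b ≠ 0, c ≠ 0, bc = 1, and x + y/b = 1. For 1 ≤ i ≤ n−1 let A_i = L_i([[0, b],[c, 0]]) and B_i = L_i([[x, y],[cy/b, x]]) be n×n complex matrices. Then the vector v ∈ ℂⁿ with entries v_j = c^j (1 ≤ j ≤ n) satisfies A_i v = v and B_i v = v for all 1 ≤ i ≤ n−1; consequently the one-dimensional subspace spanned by v is a nontrivial proper subspace of ℂⁿ invariant under all A_i and B_i, so the family {A_i, B_i : 1 ≤ i ≤ n−1} is reducible. -/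
open Matrix

lemma localBlock_mulVec_fix (n k : ℕ) (hk : k + 1 < n) (c : ℂ)
    (M : Matrix (Fin 2) (Fin 2) ℂ)
    (h0 : M 0 0 + M 0 1 * c = 1) (h1 : M 1 0 + M 1 1 * c = c)
    (v : Fin n → ℂ) (hv : ∀ j : Fin n, v j = c ^ (j.val + 1)) :
    (localBlock n k M).mulVec v = v := by
  have hkn : k < n := Nat.lt_of_succ_lt hk
  funext j
  rw [mulVec, dotProduct]
  have hab : (⟨k, hkn⟩ : Fin n) ≠ ⟨k + 1, hk⟩ := by simp [Fin.ext_iff]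
  by_cases hj0 : j.val = k
  · have hsum : ∑ l, localBlock n k M j l * v l
        = ∑ l ∈ ({⟨k, hkn⟩, ⟨k + 1, hk⟩} : Finset (Fin n)), localBlock n k M j l * v l := by
      refine (Finset.sum_subset (Finset.subset_univ _) ?_).symm
      intro l _ hl
      simp only [Finset.mem_insert, Finset.mem_singleton, not_or] at hl
      obtain ⟨hl1, hl2⟩ := hl
      have h1' : l.val ≠ k := fun h => hl1 (Fin.ext h)
      have h2' : l.val ≠ k + 1 := fun h => hl2 (Fin.ext h)
      have hjl : j ≠ l := fun h => h1' (h ▸ hj0)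
      simp [localBlock, hj0, h1', h2', hjl]
    rw [hsum, Finset.sum_pair hab]
    simp only [localBlock, hj0, hv]
    norm_num
    linear_combination (c ^ (k + 1)) * h0
  · by_cases hj1 : j.val = k + 1
    · have hsum : ∑ l, localBlock n k M j l * v l
          = ∑ l ∈ ({⟨k, hkn⟩, ⟨k + 1, hk⟩} : Finset (Fin n)), localBlock n k M j l * v l := by
        refine (Finset.sum_subset (Finset.subset_univ _) ?_).symm
        intro l _ hl
        simp only [Finset.mem_insert, Finset.mem_singleton, not_or] at hl
        obtain ⟨hl1, hl2⟩ := hl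
        have h1' : l.val ≠ k := fun h => hl1 (Fin.ext h)
        have h2' : l.val ≠ k + 1 := fun h => hl2 (Fin.ext h)
        have hjl : j ≠ l := fun h => h2' (h ▸ hj1)
        simp [localBlock, hj0, hj1, h1', h2', hjl]
      rw [hsum, Finset.sum_pair hab]
      simp only [localBlock, hj0, hj1, hv]
      norm_num
      linear_combination (c ^ (k + 1)) * h1
    · rw [Finset.sum_eq_single j]
      · simp [localBlock, hj0, hj1]
      · intro l _ hlj
        have : j ≠ l := fun h => hlj h.symm
        simp [localBlock, hj0, hj1, this]
      · simp

/-- Theorem 5.6, second case, reducibility part: when `bc = 1` and `x + y/b = 1`,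
the homogeneous local representation `ρ₃` of `SBₙ` is reducible; the vector with entries
`v_j = c^j` is fixed by all `ρ₃(σ_i)` and `ρ₃(τ_i)`, and spans a nontrivial proper
invariant subspace. -/
theorem rho3_local_reducible_of_bc_eq_one (n : ℕ) (hn : 3 ≤ n) (b c x y : ℂ)
    (hb : b ≠ 0) (hc : c ≠ 0) (hbc : b * c = 1) (hxy : x + y / b = 1)
    (A B : ℕ → Matrix (Fin n) (Fin n) ℂ)
    (hA : ∀ i, A i = localBlock n (i - 1) !![0, b; c, 0])
    (hB : ∀ i, B i = localBlock n (i - 1) !![x, y; c * y / b, x])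
    (v : Fin n → ℂ) (hv : ∀ j : Fin n, v j = c ^ (j.val + 1)) :
    (∀ i : ℕ, 1 ≤ i → i ≤ n - 1 → (A i).mulVec v = v ∧ (B i).mulVec v = v) ∧
    Submodule.span ℂ {v} ≠ ⊥ ∧ Submodule.span ℂ {v} ≠ ⊤ ∧
    (∀ i : ℕ, 1 ≤ i → i ≤ n - 1 → ∀ u ∈ Submodule.span ℂ {v},
        (A i).mulVec u ∈ Submodule.span ℂ {v} ∧ (B i).mulVec u ∈ Submodule.span ℂ {v}) := by
  have hcb : c = b⁻¹ := by field_simp; linear_combination hbc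
  have hfix : ∀ i : ℕ, 1 ≤ i → i ≤ n - 1 → (A i).mulVec v = v ∧ (B i).mulVec v = v := by
    intro i hi1 hi2
    have hk : (i - 1) + 1 < n := by omega
    constructor
    · rw [hA i]
      exact localBlock_mulVec_fix n (i - 1) hk c _ (by simp [hbc]) (by simp) v hv
    · rw [hB i]
      refine localBlock_mulVec_fix n (i - 1) hk c _ ?_ ?_ v hv
      · show x + y * c = 1
        rw [hcb, ← div_eq_mul_inv]
        exact hxy
      · show c * y / b + x * c = c
        rw [hcb]
        have hb' : b⁻¹ * b = 1 := inv_mul_cancel₀ hb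
        linear_combination b⁻¹ * hxy
  refine ⟨hfix, ?_, ?_, ?_⟩
  · rw [Ne, Submodule.span_singleton_eq_bot]
    intro h
    have h0 : v ⟨0, by omega⟩ = 0 := by rw [h]; rfl
    rw [hv] at h0
    simp at h0
    exact hc h0
  · intro h
    have hw : (Pi.single (⟨0, by omega⟩ : Fin n) (1 : ℂ) : Fin n → ℂ) ∈
        Submodule.span ℂ {v} := h ▸ Submodule.mem_top
    obtain ⟨a, ha⟩ := Submodule.mem_span_singleton.mp hw
    have h0 := congrFun ha ⟨0, by omega⟩
    have h1 := congrFun ha ⟨1, by omega⟩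
    simp [hv, Pi.single_apply, Fin.ext_iff] at h0 h1
    rcases h1 with h' | h'
    · rw [h'] at h0; simp at h0
    · exact hc h'
  · intro i hi1 hi2 u hu
    obtain ⟨a, ha⟩ := Submodule.mem_span_singleton.mp hu
    obtain ⟨hAi, hBi⟩ := hfix i hi1 hi2
    constructor
    · rw [← ha, mulVec_smul, hAi]
      exact Submodule.smul_mem _ a (Submodule.mem_span_singleton_self v)
    · rw [← ha, mulVec_smul, hBi]
      exact Submodule.smul_mem _ a (Submodule.mem_span_singleton_self v)
end
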